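/- arXiv:2307.11564 — 3 statements merged into one kernel-verified Lean document; each statement's English description precedes it below -/
import Mathlib

section
/- (Bergman–Lenstra) Let G be a group and H a subgroup of G. Then [H : H ∩ gHg⁻¹] is finite and at most 2 for every g ∈ G if and only if G has a normal subgroup N such that either H ≤ N and [N : H] ≤ 2, or N ≤ H and [H : N] ≤ 2 (these indices being finite). -/
namespace BLaux

variable {G : Type*} [Group G]

def cj (g : G) (K : Subgroup G) : Subgroup G := Subgroup.map (MulAut.conj g).toMonoidHom K

lemma mem_cj {K : Subgroup G} {g x : G} : x ∈ cj g K ↔ g⁻¹ * x * g ∈ K := by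
  rw [cj, Subgroup.mem_map_equiv, MulAut.conj_symm_apply]

lemma cj_cj (s t : G) (K : Subgroup G) : cj s (cj t K) = cj (s * t) K := by
  ext x
  rw [mem_cj, mem_cj, mem_cj]
  have : (s * t)⁻¹ * x * (s * t) = t⁻¹ * (s⁻¹ * x * s) * t := by group
  rw [this]

lemma cj_one (K : Subgroup G) : cj (1 : G) K = K := by
  ext x; rw [mem_cj]; simp

lemma cj_mono {s : G} {K L : Subgroup G} (h : K ≤ L) : cj s K ≤ cj s L :=
  Subgroup.map_mono h

lemma mem_cj_shift {K : Subgroup G} (s : G) {t x : G} :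
    x ∈ cj t K ↔ s⁻¹ * x * s ∈ cj (s⁻¹ * t) K := by
  rw [mem_cj, mem_cj]
  have : (s⁻¹ * t)⁻¹ * (s⁻¹ * x * s) * (s⁻¹ * t) = t⁻¹ * x * t := by group
  rw [this]

lemma coset2 {K H : Subgroup G} (h0 : K.relIndex H ≠ 0)
    (h2 : K.relIndex H ≤ 2) {x y : G} (hx : x ∈ H) (hy : y ∈ H)
    (hxK : x ∉ K) (hyK : y ∉ K) : x⁻¹ * y ∈ K := by
  classical
  set Q := H ⧸ (K.subgroupOf H) with hQ
  have hcard : Nat.card Q = K.relIndex H := rfl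
  have hfin : Finite Q := by
    rcases Nat.card_ne_zero.mp (hcard ▸ h0) with ⟨_, h⟩; exact h
  set u1 : Q := QuotientGroup.mk 1 with hu1
  set ux : Q := QuotientGroup.mk ⟨x, hx⟩ with hux
  set uy : Q := QuotientGroup.mk ⟨y, hy⟩ with huy
  have h1x : u1 ≠ ux := by
    intro h
    rw [hu1, hux, QuotientGroup.eq] at h
    simp only [Subgroup.mem_subgroupOf] at h
    apply hxK
    simpa using h
  have h1y : u1 ≠ uy := by
    intro h
    rw [hu1, huy, QuotientGroup.eq] at h
    simp only [Subgroup.mem_subgroupOf] at h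
    apply hyK
    simpa using h
  by_cases hxy : ux = uy
  · rw [hux, huy, QuotientGroup.eq] at hxy
    simpa only [Subgroup.mem_subgroupOf, Subgroup.coe_mul, Subgroup.coe_inv] using hxy
  · exfalso
    have hinj : Function.Injective (fun i : Fin 3 => if i = 0 then u1 else if i = 1 then ux else uy) := by
      intro i j hij
      fin_cases i <;> fin_cases j <;> simp_all
    have := Nat.card_le_card_of_injective _ hinj
    simp only [Nat.card_eq_fintype_card, Fintype.card_fin] at this
    omega

section Main

variable (H : Subgroup G)

/-- two cosets, base version -/
lemma TC1 (hH : ∀ g : G, (cj g H).relIndex H ≠ 0 ∧ (cj g H).relIndex H ≤ 2) (t : G) {x y : G} (hx : x ∈ H) (hy : y ∈ H)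
    (hxt : x ∉ cj t H) (hyt : y ∉ cj t H) : x⁻¹ * y ∈ cj t H := by
  obtain ⟨h0, h2⟩ := hH t
  have e : (cj t H ⊓ H).relIndex H = (cj t H).relIndex H := Subgroup.inf_relIndex_right _ _
  have hmem : x⁻¹ * y ∈ cj t H ⊓ H := by
    refine coset2 (K := cj t H ⊓ H) (by rw [e]; exact h0) (by rw [e]; exact h2) hx hy ?_ ?_
    · exact fun h => hxt h.1
    · exact fun h => hyt h.1
  exact hmem.1

/-- two cosets, conjugated version -/
lemma TC (hH : ∀ g : G, (cj g H).relIndex H ≠ 0 ∧ (cj g H).relIndex H ≤ 2) (s t : G) {x y : G} (hx : x ∈ cj s H) (hy : y ∈ cj s H)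
    (hxt : x ∉ cj t H) (hyt : y ∉ cj t H) : x⁻¹ * y ∈ cj t H := by
  have hx0 : s⁻¹ * x * s ∈ H := mem_cj.mp hx
  have hy0 : s⁻¹ * y * s ∈ H := mem_cj.mp hy
  have hxt0 : s⁻¹ * x * s ∉ cj (s⁻¹ * t) H := fun h => hxt ((mem_cj_shift s).mpr h)
  have hyt0 : s⁻¹ * y * s ∉ cj (s⁻¹ * t) H := fun h => hyt ((mem_cj_shift s).mpr h)
  have := TC1 H hH (s⁻¹ * t) hx0 hy0 hxt0 hyt0
  have e : (s⁻¹ * x * s)⁻¹ * (s⁻¹ * y * s) = s⁻¹ * (x⁻¹ * y) * s := by group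
  rw [e] at this
  exact (mem_cj_shift s).mpr this

/-- no strict containment among conjugates -/
lemma le_H_eq (hH : ∀ g : G, (cj g H).relIndex H ≠ 0 ∧ (cj g H).relIndex H ≤ 2) (s : G) (hle : cj s H ≤ H) : cj s H = H := by
  refine le_antisymm hle fun h hh => ?_
  by_contra hV
  set V := cj s H
  have hV2le : cj s V ≤ V := cj_mono hle
  have hcc : cj s V = cj (s * s) H := cj_cj s s H
  have hh' : s * h * s⁻¹ ∈ V := by
    rw [mem_cj]
    have : s⁻¹ * (s * h * s⁻¹) * s = h := by group
    rw [this]; exact hh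
  have hh'H : s * h * s⁻¹ ∈ H := hle hh'
  have hh'V2 : s * h * s⁻¹ ∉ cj (s * s) H := by
    rw [← hcc, mem_cj]
    have : s⁻¹ * (s * h * s⁻¹) * s = h := by group
    rw [this]; exact hV
  have hhV2 : h ∉ cj (s * s) H := by
    intro hc
    rw [← hcc] at hc
    exact hV (hV2le hc)
  have := TC1 H hH (s * s) hh hh'H hhV2 hh'V2
  rw [← hcc] at this
  have : h⁻¹ * (s * h * s⁻¹) ∈ V := hV2le this
  have hmem : s * h * s⁻¹ ∈ V := hh'
  have : h ∈ V := by
    have e : h = (s * h * s⁻¹) * (h⁻¹ * (s * h * s⁻¹))⁻¹ := by group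
    rw [e]; exact V.mul_mem hmem (V.inv_mem ‹h⁻¹ * (s * h * s⁻¹) ∈ V›)
  exact hV this

lemma cj_eq_of_le (hH : ∀ g : G, (cj g H).relIndex H ≠ 0 ∧ (cj g H).relIndex H ≤ 2) {s t : G} (hle : cj s H ≤ cj t H) : cj s H = cj t H := by
  have h1 : cj t⁻¹ (cj s H) ≤ cj t⁻¹ (cj t H) := cj_mono hle
  rw [cj_cj, cj_cj, inv_mul_cancel, cj_one] at h1
  have h2 := le_H_eq H hH (t⁻¹ * s) h1
  have h3 := congrArg (cj t) h2
  rw [cj_cj] at h3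
  have e : t * (t⁻¹ * s) = s := by group
  rw [e] at h3
  exact h3

end Main

section Core
variable (H : Subgroup G)

lemma mem_normalCore' {a : G} : a ∈ H.normalCore ↔ ∀ b : G, b * a * b⁻¹ ∈ H := Iff.rfl

lemma mem_core_of_all {a : G} (h : ∀ t : G, a ∈ cj t H) : a ∈ H.normalCore := by
  rw [mem_normalCore']
  intro b
  have := mem_cj.mp (h b⁻¹)
  simpa using this

lemma core_le_cj (t : G) : H.normalCore ≤ cj t H := by
  intro a ha
  rw [mem_cj]
  have := (mem_normalCore' H).mp ha t⁻¹
  simpa using this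

lemma sq_core (hH : ∀ g : G, (cj g H).relIndex H ≠ 0 ∧ (cj g H).relIndex H ≤ 2)
    {x : G} (hx : x ∈ H) : x * x ∈ H.normalCore := by
  apply mem_core_of_all
  intro t
  by_cases hxt : x ∈ cj t H
  · exact (cj t H).mul_mem hxt hxt
  · have hxi : x⁻¹ ∉ cj t H := fun h => hxt (by simpa using (cj t H).inv_mem h)
    have := TC1 H hH t (H.inv_mem hx) hx hxi hxt
    simpa using this

/-- conjugation by elements of H preserves H ∩ (cj t H) -/
lemma normJ (hH : ∀ g : G, (cj g H).relIndex H ≠ 0 ∧ (cj g H).relIndex H ≤ 2)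
    (t : G) {h j : G} (hh : h ∈ H) (hj : j ∈ H) (hjt : j ∈ cj t H) :
    h⁻¹ * j * h ∈ cj t H := by
  by_cases hht : h ∈ cj t H
  · exact Subgroup.mul_mem _ (Subgroup.mul_mem _ ((cj t H).inv_mem hht) hjt) hht
  · have hjh : j * h ∈ H := H.mul_mem hj hh
    have hjht : j * h ∉ cj t H := by
      intro hc
      exact hht (by simpa using (cj t H).mul_mem ((cj t H).inv_mem hjt) hc)
    have t1 := TC1 H hH t hjh hh hjht hht
    have e : (j * h)⁻¹ * h = h⁻¹ * j⁻¹ * h := by group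
    rw [e] at t1
    have := (cj t H).inv_mem t1
    have e2 : (h⁻¹ * j⁻¹ * h)⁻¹ = h⁻¹ * j * h := by group
    rwa [e2] at this

lemma comm_core (hH : ∀ g : G, (cj g H).relIndex H ≠ 0 ∧ (cj g H).relIndex H ≤ 2)
    {x y : G} (hx : x ∈ H) (hy : y ∈ H) : x⁻¹ * y⁻¹ * x * y ∈ H.normalCore := by
  apply mem_core_of_all
  intro t
  set V := cj t H with hV
  by_cases hxV : x ∈ V <;> by_cases hyV : y ∈ V
  · exact V.mul_mem (V.mul_mem (V.mul_mem (V.inv_mem hxV) (V.inv_mem hyV)) hxV) hyV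
  · -- x ∈ V, y ∉ V : x⁻¹ * (y⁻¹ * x * y)
    have h1 : y⁻¹ * x * y ∈ V := normJ H hH t hy hx hxV
    have e : x⁻¹ * y⁻¹ * x * y = x⁻¹ * (y⁻¹ * x * y) := by group
    rw [e]
    exact V.mul_mem (V.inv_mem hxV) h1
  · -- x ∉ V, y ∈ V : (x⁻¹ * y⁻¹ * x) * y
    have h1 : x⁻¹ * y⁻¹ * x ∈ V := normJ H hH t hx (H.inv_mem hy) (V.inv_mem hyV)
    exact V.mul_mem h1 hyV
  · -- both outside
    have hc : x⁻¹ * y ∈ V := TC1 H hH t hx hy hxV hyV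
    have hcH : x⁻¹ * y ∈ H := H.mul_mem (H.inv_mem hx) hy
    have h1 : x⁻¹ * (x⁻¹ * y)⁻¹ * x ∈ V := normJ H hH t hx (H.inv_mem hcH) (V.inv_mem hc)
    have e : x⁻¹ * y⁻¹ * x * y = (x⁻¹ * (x⁻¹ * y)⁻¹ * x) * (x⁻¹ * y) := by group
    rw [e]
    exact V.mul_mem h1 hc

/-- squares of elements of conjugates lie in the normal core -/
lemma sqC (hH : ∀ g : G, (cj g H).relIndex H ≠ 0 ∧ (cj g H).relIndex H ≤ 2)
    (s : G) {x : G} (hx : x ∈ cj s H) : x * x ∈ H.normalCore := by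
  have hx0 : s⁻¹ * x * s ∈ H := mem_cj.mp hx
  have h := sq_core H hH hx0
  have e : x * x = s * ((s⁻¹ * x * s) * (s⁻¹ * x * s)) * s⁻¹ := by group
  rw [e]
  exact Subgroup.Normal.conj_mem (Subgroup.normalCore_normal H) _ h s

/-- commutators of elements of a common conjugate lie in the normal core -/
lemma commC (hH : ∀ g : G, (cj g H).relIndex H ≠ 0 ∧ (cj g H).relIndex H ≤ 2)
    (s : G) {x y : G} (hx : x ∈ cj s H) (hy : y ∈ cj s H) :
    x⁻¹ * y⁻¹ * x * y ∈ H.normalCore := by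
  have hx0 : s⁻¹ * x * s ∈ H := mem_cj.mp hx
  have hy0 : s⁻¹ * y * s ∈ H := mem_cj.mp hy
  have h := comm_core H hH hx0 hy0
  have e : x⁻¹ * y⁻¹ * x * y =
      s * ((s⁻¹ * x * s)⁻¹ * (s⁻¹ * y * s)⁻¹ * (s⁻¹ * x * s) * (s⁻¹ * y * s)) * s⁻¹ := by group
  rw [e]
  exact Subgroup.Normal.conj_mem (Subgroup.normalCore_normal H) _ h s


section Main2
variable (H : Subgroup G)

lemma TCH (hH : ∀ g : G, (cj g H).relIndex H ≠ 0 ∧ (cj g H).relIndex H ≤ 2)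
    (s : G) {x y : G} (hx : x ∈ cj s H) (hy : y ∈ cj s H)
    (hxH : x ∉ H) (hyH : y ∉ H) : x⁻¹ * y ∈ H := by
  have := TC H hH s 1 hx hy (by rwa [cj_one]) (by rwa [cj_one])
  rwa [cj_one] at this

lemma not_le_of_ne {s : G} (hH : ∀ g : G, (cj g H).relIndex H ≠ 0 ∧ (cj g H).relIndex H ≤ 2)
    (hne : cj s H ≠ H) : (¬ cj s H ≤ H) ∧ ¬ H ≤ cj s H := by
  constructor
  · exact fun hle => hne (le_H_eq H hH s hle)
  · intro hle
    apply hne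
    have : cj (1 : G) H ≤ cj s H := by rwa [cj_one]
    have := cj_eq_of_le H hH this
    rw [cj_one] at this
    exact this.symm

/-- Key lemma: every element of the conjugate `cj a H` normalizes `H`. -/
lemma conj_mem_H (hH : ∀ g : G, (cj g H).relIndex H ≠ 0 ∧ (cj g H).relIndex H ≤ 2)
    (a w k₀ : G) (hk₀Ba : k₀ ∈ cj a H) (hk₀H : k₀ ∈ H) (hk₀W : k₀ ∉ cj w H)
    (hne : cj a H ≠ H) :
    ∀ y ∈ cj a H, ∀ x ∈ H, y⁻¹ * x * y ∈ H := by
  set Ba := cj a H with hBadef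
  set W := cj w H with hWdef
  obtain ⟨hnle1, hnle2⟩ := not_le_of_ne H hH hne
  obtain ⟨h₁, hh₁H, hh₁Ba⟩ := SetLike.not_le_iff_exists.mp hnle2
  obtain ⟨b, hbBa, hbH⟩ := SetLike.not_le_iff_exists.mp hnle1
  -- construct p ∈ W ∩ H, p ∉ Ba
  obtain ⟨p, hpW, hpH, hpBa⟩ : ∃ p, p ∈ W ∧ p ∈ H ∧ p ∉ Ba := by
    by_cases hc : h₁ ∈ W
    · exact ⟨h₁, hc, hh₁H, hh₁Ba⟩
    · refine ⟨h₁⁻¹ * k₀, TC1 H hH w hh₁H hk₀H hc hk₀W, H.mul_mem (H.inv_mem hh₁H) hk₀H, ?_⟩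
      intro hmem
      apply hh₁Ba
      have : k₀ * (h₁⁻¹ * k₀)⁻¹ ∈ Ba := Ba.mul_mem hk₀Ba (Ba.inv_mem hmem)
      have e : k₀ * (h₁⁻¹ * k₀)⁻¹ = h₁ := by group
      rwa [e] at this
  -- construct q ∈ W ∩ Ba, q ∉ H
  obtain ⟨q, hqW, hqBa, hqH⟩ : ∃ q, q ∈ W ∧ q ∈ Ba ∧ q ∉ H := by
    by_cases hc : b ∈ W
    · exact ⟨b, hc, hbBa, hbH⟩
    · refine ⟨b⁻¹ * k₀, TC H hH a w hbBa hk₀Ba hc hk₀W, Ba.mul_mem (Ba.inv_mem hbBa) hk₀Ba, ?_⟩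
      intro hmem
      apply hbH
      have : k₀ * (b⁻¹ * k₀)⁻¹ ∈ H := H.mul_mem hk₀H (H.inv_mem hmem)
      have e : k₀ * (b⁻¹ * k₀)⁻¹ = b := by group
      rwa [e] at this
  intro y hy x hx
  by_cases hyH : y ∈ H
  · -- y ∈ H : use commutators in the core
    have hcm := comm_core H hH hx hyH
    have e : y⁻¹ * x * y = x * (x⁻¹ * y⁻¹ * x * y) := by group
    rw [e]
    exact H.mul_mem hx (H.normalCore_le hcm)
  by_cases hxBa : x ∈ Ba
  · -- x ∈ Ba ∩ H : commutator of two elements of Ba is in the core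
    have hcm := commC H hH a hxBa hy
    have e : y⁻¹ * x * y = x * (x⁻¹ * y⁻¹ * x * y) := by group
    rw [e]
    exact H.mul_mem hx (H.normalCore_le hcm)
  -- main case : x ∈ H \ Ba, y ∈ Ba \ H
  have hkpBa : x⁻¹ * p ∈ Ba := TC1 H hH a hx hpH hxBa hpBa
  have hqpW : q * p ∈ W := W.mul_mem hqW hpW
  have hqpBa : q * p ∉ Ba := by
    intro hmem
    apply hpBa
    have : q⁻¹ * (q * p) ∈ Ba := Ba.mul_mem (Ba.inv_mem hqBa) hmem
    simpa using this
  have hvBa : p⁻¹ * (q * p) ∈ Ba := TC H hH w a hpW hqpW hpBa hqpBa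
  set v := p⁻¹ * (q * p) with hvdef
  have hqp_eq : q * p = p * v := by rw [hvdef]; group
  by_cases hvH : v ∈ H
  · exfalso
    apply hqH
    have : q = p * v * p⁻¹ := by rw [← hqp_eq]; group
    rw [this]
    exact H.mul_mem (H.mul_mem hpH hvH) (H.inv_mem hpH)
  · have hkq : y⁻¹ * q ∈ H := TCH H hH a hy hqBa hyH hqH
    have hkv : y⁻¹ * v ∈ H := TCH H hH a hy hvBa hyH hvH
    have hpy : y⁻¹ * p * y ∈ H := by
      have hmem : (y⁻¹ * q) * p * (y⁻¹ * v)⁻¹ ∈ H :=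
        H.mul_mem (H.mul_mem hkq hpH) (H.inv_mem hkv)
      have e : (y⁻¹ * q) * p * (y⁻¹ * v)⁻¹ = y⁻¹ * (q * p) * v⁻¹ * y := by group
      rw [e, hqp_eq] at hmem
      have e2 : y⁻¹ * (p * v) * v⁻¹ * y = y⁻¹ * p * y := by group
      rwa [e2] at hmem
    have hkpy : y⁻¹ * (x⁻¹ * p) * y ∈ H := by
      have hcm := commC H hH a hkpBa hy
      have hkpH : x⁻¹ * p ∈ H := H.mul_mem (H.inv_mem hx) hpH
      have e : y⁻¹ * (x⁻¹ * p) * y =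
          (x⁻¹ * p) * ((x⁻¹ * p)⁻¹ * y⁻¹ * (x⁻¹ * p) * y) := by group
      rw [e]
      exact H.mul_mem hkpH (H.normalCore_le hcm)
    have e2 : y⁻¹ * x * y = (y⁻¹ * p * y) * (y⁻¹ * (x⁻¹ * p) * y)⁻¹ := by group
    rw [e2]
    exact H.mul_mem hpy (H.inv_mem hkpy)

end Main2
end Core

section No
variable (H : Subgroup G)

/-- the subgroup `H ∪ bH` -/
def No (b : G) (hb2 : b * b ∈ H) (hconj : ∀ x ∈ H, b⁻¹ * x * b ∈ H) : Subgroup G where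
  carrier := {g | g ∈ H ∨ b⁻¹ * g ∈ H}
  one_mem' := Or.inl H.one_mem
  mul_mem' := by
    rintro x y (hx | hx) (hy | hy)
    · exact Or.inl (H.mul_mem hx hy)
    · refine Or.inr ?_
      have e : b⁻¹ * (x * y) = (b⁻¹ * x * b) * (b⁻¹ * y) := by group
      rw [e]
      exact H.mul_mem (hconj x hx) hy
    · refine Or.inr ?_
      have e : b⁻¹ * (x * y) = (b⁻¹ * x) * y := by group
      rw [e]
      exact H.mul_mem hx hy
    · refine Or.inl ?_
      have e : x * y = (b * b) * (b⁻¹ * (b⁻¹ * x) * b) * (b⁻¹ * y) := by group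
      rw [e]
      exact H.mul_mem (H.mul_mem hb2 (hconj _ hx)) hy
  inv_mem' := by
    rintro x (hx | hx)
    · exact Or.inl (H.inv_mem hx)
    · refine Or.inr ?_
      have e : b⁻¹ * x⁻¹ = (b⁻¹ * (b⁻¹ * x)⁻¹ * b) * (b * b)⁻¹ := by group
      rw [e]
      exact H.mul_mem (hconj _ (H.inv_mem hx)) (H.inv_mem hb2)

lemma mem_No {b : G} {hb2 : b * b ∈ H} {hconj : ∀ x ∈ H, b⁻¹ * x * b ∈ H} {x : G} :
    x ∈ No H b hb2 hconj ↔ x ∈ H ∨ b⁻¹ * x ∈ H := Iff.rfl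

lemma H_le_No {b : G} {hb2 : b * b ∈ H} {hconj : ∀ x ∈ H, b⁻¹ * x * b ∈ H} :
    H ≤ No H b hb2 hconj := fun _ hx => Or.inl hx

/-- all conjugates of H lie in No -/
lemma cj_le_No (hH : ∀ g : G, (cj g H).relIndex H ≠ 0 ∧ (cj g H).relIndex H ≤ 2)
    (a w k₀ b : G) (hk₀Ba : k₀ ∈ cj a H) (hk₀H : k₀ ∈ H) (hk₀W : k₀ ∉ cj w H)
    (hne : cj a H ≠ H) (hbBa : b ∈ cj a H) (hbH : b ∉ H)
    (hb2 : b * b ∈ H) (hconj : ∀ x ∈ H, b⁻¹ * x * b ∈ H) :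
    ∀ s : G, cj s H ≤ No H b hb2 hconj := by
  set Ba := cj a H with hBadef
  set W := cj w H with hWdef
  set N := No H b hb2 hconj with hNdef
  obtain ⟨h₁, hh₁H, hh₁Ba⟩ := SetLike.not_le_iff_exists.mp (not_le_of_ne H hH hne).2
  -- sub-claim: conjugates missing some element of Ba ⊓ H are inside N
  have subC1 : ∀ s : G, ∀ κ : G, κ ∈ Ba → κ ∈ H → κ ∉ cj s H → cj s H ≤ N := by
    intro s κ hκBa hκH hκZ
    set Z := cj s H with hZdef
    obtain ⟨pz, hpzZ, hpzH, hpzBa⟩ : ∃ pz, pz ∈ Z ∧ pz ∈ H ∧ pz ∉ Ba := by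
      by_cases hc : h₁ ∈ Z
      · exact ⟨h₁, hc, hh₁H, hh₁Ba⟩
      · refine ⟨h₁⁻¹ * κ, TC1 H hH s hh₁H hκH hc hκZ,
          H.mul_mem (H.inv_mem hh₁H) hκH, ?_⟩
        intro hmem
        apply hh₁Ba
        have : κ * (h₁⁻¹ * κ)⁻¹ ∈ Ba := Ba.mul_mem hκBa (Ba.inv_mem hmem)
        have e : κ * (h₁⁻¹ * κ)⁻¹ = h₁ := by group
        rwa [e] at this
    intro z hz
    by_cases hzBa : z ∈ Ba
    · by_cases hzH : z ∈ H
      · exact Or.inl hzH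
      · exact Or.inr (TCH H hH a hbBa hzBa hbH hzH)
    · have hv : pz⁻¹ * z ∈ Ba := TC H hH s a hpzZ hz hpzBa hzBa
      by_cases hvH : pz⁻¹ * z ∈ H
      · refine Or.inl ?_
        have e : z = pz * (pz⁻¹ * z) := by group
        rw [e]
        exact H.mul_mem hpzH hvH
      · refine Or.inr ?_
        have hbv : b⁻¹ * (pz⁻¹ * z) ∈ H := TCH H hH a hbBa hv hbH hvH
        have e : b⁻¹ * z = (b⁻¹ * pz * b) * (b⁻¹ * (pz⁻¹ * z)) := by group
        rw [e]
        exact H.mul_mem (hconj pz hpzH) hbv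
  intro s
  by_cases hsH : cj s H = H
  · rw [hsH]; exact H_le_No H
  by_cases hKs : ∃ κ : G, κ ∈ Ba ∧ κ ∈ H ∧ κ ∉ cj s H
  · obtain ⟨κ, h1, h2, h3⟩ := hKs
    exact subC1 s κ h1 h2 h3
  · push_neg at hKs
    set Z := cj s H with hZdef
    have hWle : W ≤ N := subC1 w k₀ hk₀Ba hk₀H hk₀W
    have hk₀Z : k₀ ∈ Z := hKs k₀ hk₀Ba hk₀H
    obtain ⟨ζ, hζZ, hζH⟩ := SetLike.not_le_iff_exists.mp (not_le_of_ne H hH hsH).1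
    obtain ⟨p', hp'Z, hp'W, hp'H⟩ : ∃ p', p' ∈ Z ∧ p' ∈ W ∧ p' ∉ H := by
      by_cases hc : ζ ∈ W
      · exact ⟨ζ, hζZ, hc, hζH⟩
      · refine ⟨k₀⁻¹ * ζ, Z.mul_mem (Z.inv_mem hk₀Z) hζZ,
          TC H hH s w hk₀Z hζZ hk₀W hc, ?_⟩
        intro hmem
        apply hζH
        have : k₀ * (k₀⁻¹ * ζ) ∈ H := H.mul_mem hk₀H hmem
        simpa using this
    intro z hz
    by_cases hzH : z ∈ H
    · exact Or.inl hzH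
    · have hv : p'⁻¹ * z ∈ H := TCH H hH s hp'Z hz hp'H hzH
      have e : z = p' * (p'⁻¹ * z) := by group
      rw [e]
      exact N.mul_mem (hWle hp'W) (H_le_No H hv)

end No

section Fwd
variable (H : Subgroup G)

lemma forward (hH : ∀ g : G, (cj g H).relIndex H ≠ 0 ∧ (cj g H).relIndex H ≤ 2) :
    ∃ N : Subgroup G, N.Normal ∧
      ((H ≤ N ∧ H.relIndex N ≠ 0 ∧ H.relIndex N ≤ 2) ∨
       (N ≤ H ∧ N.relIndex H ≠ 0 ∧ N.relIndex H ≤ 2)) := by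
  classical
  by_cases hA : (H.normalCore).relIndex H ≠ 0 ∧ (H.normalCore).relIndex H ≤ 2
  · exact ⟨H.normalCore, H.normalCore_normal,
      Or.inr ⟨H.normalCore_le, hA.1, hA.2⟩⟩
  by_cases hnorm : ∀ g : G, cj g H = H
  · exfalso
    apply hA
    have hcore : H.normalCore = H := by
      refine le_antisymm H.normalCore_le fun h hh => ?_
      exact mem_core_of_all H fun t => (hnorm t).symm ▸ hh
    rw [hcore, Subgroup.relIndex_self]
    exact ⟨one_ne_zero, one_le_two⟩
  push_neg at hnorm
  obtain ⟨a, hne⟩ := hnorm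
  set Ba := cj a H with hBadef
  -- find k₀ ∈ Ba ⊓ H not in the normal core
  obtain ⟨k₀, hk₀Ba, hk₀H, hk₀core⟩ :
      ∃ k₀ : G, k₀ ∈ Ba ∧ k₀ ∈ H ∧ k₀ ∉ H.normalCore := by
    by_contra hcon
    push_neg at hcon
    apply hA
    have hcore : H.normalCore = Ba ⊓ H := by
      refine le_antisymm (le_inf (core_le_cj H a) H.normalCore_le) ?_
      exact fun κ hκ => hcon κ hκ.1 hκ.2
    rw [hcore, Subgroup.inf_relIndex_right]
    exact hH a
  -- find a conjugate W avoiding k₀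
  obtain ⟨w, hk₀W⟩ : ∃ w : G, k₀ ∉ cj w H := by
    by_contra hcon
    push_neg at hcon
    exact hk₀core (mem_core_of_all H hcon)
  -- pick b ∈ Ba \ H
  obtain ⟨b, hbBa, hbH⟩ := SetLike.not_le_iff_exists.mp (not_le_of_ne H hH hne).1
  have hconj : ∀ x ∈ H, b⁻¹ * x * b ∈ H := by
    intro x hx
    have := conj_mem_H H hH a w k₀ hk₀Ba hk₀H hk₀W hne b hbBa x hx
    exact this
  have hb2 : b * b ∈ H := H.normalCore_le (sqC H hH a hbBa)
  set N := No H b hb2 hconj with hNdef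
  have hle : ∀ s : G, cj s H ≤ N :=
    cj_le_No H hH a w k₀ b hk₀Ba hk₀H hk₀W hne hbBa hbH hb2 hconj
  have hHN : H ≤ N := H_le_No H
  have hNormal : N.Normal := by
    constructor
    intro n hn g
    rcases hn with hn | hn
    · have : g * n * g⁻¹ ∈ cj g H := by
        rw [mem_cj]
        have e : g⁻¹ * (g * n * g⁻¹) * g = n := by group
        rwa [e]
      exact hle g this
    · have h1 : g * b * g⁻¹ ∈ cj (g * a) H := by
        rw [← cj_cj]
        rw [mem_cj]
        have e : g⁻¹ * (g * b * g⁻¹) * g = b := by group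
        rwa [e]
      have h2 : g * (b⁻¹ * n) * g⁻¹ ∈ cj g H := by
        rw [mem_cj]
        have e : g⁻¹ * (g * (b⁻¹ * n) * g⁻¹) * g = b⁻¹ * n := by group
        rwa [e]
      have e : g * n * g⁻¹ = (g * b * g⁻¹) * (g * (b⁻¹ * n) * g⁻¹) := by group
      rw [e]
      exact N.mul_mem (hle (g * a) h1) (hle g h2)
  -- H has index ≤ 2 in N
  have hbN : b ∈ N := Or.inr (by simpa using H.one_mem)
  set Q := N ⧸ (H.subgroupOf N) with hQdef
  have hcard : H.relIndex N = Nat.card Q := rfl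
  have hsurj : Function.Surjective
      (fun c : Bool => if c then (QuotientGroup.mk ⟨b, hbN⟩ : Q) else QuotientGroup.mk 1) := by
    intro q
    obtain ⟨n, rfl⟩ := QuotientGroup.mk_surjective q
    rcases n.2 with hn | hn
    · refine ⟨false, ?_⟩
      simp only [if_neg Bool.false_ne_true]
      refine QuotientGroup.eq.mpr ?_
      simp only [Subgroup.mem_subgroupOf]
      simpa using hn
    · refine ⟨true, ?_⟩
      simp only [if_pos rfl]
      refine QuotientGroup.eq.mpr ?_
      simp only [Subgroup.mem_subgroupOf]
      simpa using hn
  have hfin : Finite Q := Finite.of_surjective _ hsurj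
  have h2 : Nat.card Q ≤ 2 := by
    have := Nat.card_le_card_of_surjective _ hsurj
    simpa using this
  have h0 : Nat.card Q ≠ 0 := Nat.card_ne_zero.mpr ⟨⟨QuotientGroup.mk 1⟩, hfin⟩
  exact ⟨N, hNormal, Or.inl ⟨hHN, by rw [hcard]; exact h0, by rw [hcard]; exact h2⟩⟩

end Fwd

section Bwd
variable {G : Type*} [Group G]

lemma cj_normal {N : Subgroup G} (hN : N.Normal) (g : G) : cj g N = N := by
  ext x
  rw [mem_cj]
  constructor
  · intro h
    have := hN.conj_mem _ h g
    have e : g * (g⁻¹ * x * g) * g⁻¹ = x := by group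
    rwa [e] at this
  · intro h
    have := hN.conj_mem _ h g⁻¹
    have e : g⁻¹ * x * g⁻¹⁻¹ = g⁻¹ * x * g := by group
    rwa [e] at this

lemma cj_relIndex (s : G) (A B : Subgroup G) :
    (cj s A).relIndex (cj s B) = A.relIndex B := by
  have h1 : cj s A = A.comap (MulAut.conj s).symm.toMonoidHom :=
    Subgroup.map_equiv_eq_comap_symm' (MulAut.conj s) A
  rw [h1, Subgroup.relIndex_comap]
  congr 1
  rw [cj, Subgroup.map_map]
  have : ((MulAut.conj s).symm.toMonoidHom.comp (MulAut.conj s).toMonoidHom) =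
      MonoidHom.id G := by
    ext x
    simp
  rw [this, Subgroup.map_id]

lemma normal_of_index_le_two {Γ : Type*} [Group Γ] (S : Subgroup Γ)
    (h0 : S.index ≠ 0) (h2 : S.index ≤ 2) : S.Normal := by
  constructor
  intro n hn g
  by_cases hg : g ∈ S
  · exact S.mul_mem (S.mul_mem hg hn) (S.inv_mem hg)
  · have h0' : S.relIndex ⊤ ≠ 0 := by rwa [Subgroup.relIndex_top_right]
    have h2' : S.relIndex ⊤ ≤ 2 := by rwa [Subgroup.relIndex_top_right]
    have hgi : g⁻¹ ∉ S := fun h => hg (by simpa using S.inv_mem h)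
    have hng : n * g⁻¹ ∉ S := by
      intro h
      apply hgi
      have := S.mul_mem (S.inv_mem hn) h
      simpa using this
    have := coset2 h0' h2' (Subgroup.mem_top g⁻¹) (Subgroup.mem_top (n * g⁻¹)) hgi hng
    have e : g⁻¹⁻¹ * (n * g⁻¹) = g * n * g⁻¹ := by group
    rwa [e] at this

lemma backward (H N : Subgroup G) (hN : N.Normal)
    (h : (H ≤ N ∧ H.relIndex N ≠ 0 ∧ H.relIndex N ≤ 2) ∨
         (N ≤ H ∧ N.relIndex H ≠ 0 ∧ N.relIndex H ≤ 2)) :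
    ∀ g : G, (cj g H).relIndex H ≠ 0 ∧ (cj g H).relIndex H ≤ 2 := by
  intro g
  rcases h with ⟨hle, h0, h2⟩ | ⟨hle, h0, h2⟩
  · -- H ≤ N
    have hAN : cj g H ≤ N := by
      have := cj_mono (s := g) hle
      rwa [cj_normal hN] at this
    have hrel : (cj g H).relIndex N = H.relIndex N := by
      conv_lhs => rw [← cj_normal hN g]
      exact cj_relIndex g H N
    set S := (cj g H).subgroupOf N with hSdef
    have hSidx : S.index = (cj g H).relIndex N := rfl
    have hS0 : S.index ≠ 0 := by rw [hSidx, hrel]; exact h0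
    have hS2 : S.index ≤ 2 := by rw [hSidx, hrel]; exact h2
    haveI hSnormal : S.Normal := normal_of_index_le_two S hS0 hS2
    have hdvd : S.relIndex (H.subgroupOf N) ∣ S.index :=
      Subgroup.relIndex_dvd_index_of_normal S (H.subgroupOf N)
    have hrs : S.relIndex (H.subgroupOf N) = (cj g H).relIndex H :=
      Subgroup.relIndex_subgroupOf hle
    rw [hrs] at hdvd
    constructor
    · intro hz
      rw [hz] at hdvd
      exact hS0 (Nat.eq_zero_of_zero_dvd hdvd)
    · exact le_trans (Nat.le_of_dvd (Nat.pos_of_ne_zero hS0) hdvd) hS2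
  · -- N ≤ H
    have hNA : N ≤ cj g H := by
      have := cj_mono (s := g) hle
      rwa [cj_normal hN] at this
    have hNK : N ≤ cj g H ⊓ H := le_inf hNA hle
    have hchain := Subgroup.relIndex_mul_relIndex N (cj g H ⊓ H) H hNK inf_le_right
    have heq : (cj g H ⊓ H).relIndex H = (cj g H).relIndex H :=
      Subgroup.inf_relIndex_right _ _
    rw [heq] at hchain
    constructor
    · intro hz
      rw [hz, mul_zero] at hchain
      exact h0 hchain.symm
    · calc (cj g H).relIndex H ≤ N.relIndex (cj g H ⊓ H) * (cj g H).relIndex H := by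
            have hpos : N.relIndex (cj g H ⊓ H) ≠ 0 := by
              intro hz
              rw [hz, zero_mul] at hchain
              exact h0 hchain.symm
            exact Nat.le_mul_of_pos_left _ (Nat.pos_of_ne_zero hpos)
        _ = N.relIndex H := hchain
        _ ≤ 2 := h2

end Bwd
end BLaux

theorem bergman_lenstra_index_two {G : Type*} [Group G] (H : Subgroup G) :
    (∀ g : G,
        (Subgroup.map (MulAut.conj g).toMonoidHom H).relIndex H ≠ 0 ∧
        (Subgroup.map (MulAut.conj g).toMonoidHom H).relIndex H ≤ 2) ↔
      ∃ N : Subgroup G, N.Normal ∧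
        ((H ≤ N ∧ H.relIndex N ≠ 0 ∧ H.relIndex N ≤ 2) ∨
         (N ≤ H ∧ N.relIndex H ≠ 0 ∧ N.relIndex H ≤ 2)) := by
  constructor
  · intro h
    exact BLaux.forward H h
  · rintro ⟨N, hN, h⟩ g
    exact BLaux.backward H N hN h g
end

section
/- (Wielandt) Let Ω be an infinite set and let G be a subgroup of Sym(Ω) whose natural action on Ω is primitive. If G contains a permutation x ≠ 1 with finite support {ω ∈ Ω : x ω ≠ ω}, then G contains every 3-cycle of Sym(Ω): for all pairwise distinct a, b, c ∈ Ω, the 3-cycle (swap a b) * (swap b c) belongs to G (so the alternating group, the subgroup generated by all 3-cycles, is contained in G). -/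
open Pointwise

namespace Equiv.Perm

theorem apply_inv_self {α : Type*} (f : Equiv.Perm α) (x : α) : f (f⁻¹ x) = x :=
  Equiv.apply_symm_apply f x

theorem inv_apply_self {α : Type*} (f : Equiv.Perm α) (x : α) : f⁻¹ (f x) = x :=
  Equiv.symm_apply_apply f x

end Equiv.Perm

namespace WielandtAux
set_option linter.unusedSectionVars false

variable {Ω : Type*} [DecidableEq Ω]

/-- the 3-cycle a ↦ b ↦ c ↦ a -/
def cyc3 (a b c : Ω) : Equiv.Perm Ω := Equiv.swap a b * Equiv.swap b c

lemma cyc3_apply_right (a b c : Ω) : cyc3 a b c c = a := by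
  by_cases h : b = c
  · subst h; simp [cyc3]
  · simp [cyc3, Equiv.swap_apply_right, Equiv.Perm.mul_apply]

lemma cyc3_apply_left {a b c : Ω} (hab : a ≠ b) (hac : a ≠ c) : cyc3 a b c a = b := by
  simp [cyc3, Equiv.Perm.mul_apply, Equiv.swap_apply_of_ne_of_ne hab hac]

lemma cyc3_apply_mid {a b c : Ω} (hca : c ≠ a) (hcb : c ≠ b) : cyc3 a b c b = c := by
  rw [cyc3, Equiv.Perm.mul_apply, Equiv.swap_apply_left, Equiv.swap_apply_of_ne_of_ne hca hcb]

lemma cyc3_apply_of_ne {a b c w : Ω} (h1 : w ≠ a) (h2 : w ≠ b) (h3 : w ≠ c) :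
    cyc3 a b c w = w := by
  simp [cyc3, Equiv.Perm.mul_apply, Equiv.swap_apply_of_ne_of_ne h2 h3,
    Equiv.swap_apply_of_ne_of_ne h1 h2]

lemma cyc3_conj (g : Equiv.Perm Ω) (a b c : Ω) :
    g * cyc3 a b c * g⁻¹ = cyc3 (g a) (g b) (g c) := by
  simp only [cyc3, Equiv.swap_apply_apply]
  group

lemma cyc3_inv (a b c : Ω) : (cyc3 a b c)⁻¹ = cyc3 c b a := by
  simp only [cyc3, mul_inv_rev, Equiv.swap_inv]
  rw [Equiv.swap_comm b c, Equiv.swap_comm a b]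

lemma cyc3_rot {a b c : Ω} (hab : a ≠ b) (hbc : b ≠ c) (hac : a ≠ c) :
    cyc3 a b c = cyc3 b c a := by
  ext w
  by_cases h1 : w = a
  · subst h1; rw [cyc3_apply_left hab hac, cyc3_apply_right]
  by_cases h2 : w = b
  · subst h2; rw [cyc3_apply_mid hac.symm hbc.symm, cyc3_apply_left hbc (Ne.symm hab)]
  by_cases h3 : w = c
  · subst h3; rw [cyc3_apply_right, cyc3_apply_mid hab hac]
  · rw [cyc3_apply_of_ne h1 h2 h3, cyc3_apply_of_ne h2 h3 h1]


lemma rel_univ (G : Subgroup (Equiv.Perm Ω))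
    (hprim : ∀ B : Set Ω, (∀ g ∈ G, g • B = B ∨ (g • B) ∩ B = ∅) →
        B = ∅ ∨ (∃ a : Ω, B = {a}) ∨ B = Set.univ)
    (r : Ω → Ω → Prop)
    (hrefl : ∀ a, r a a) (hsymm : ∀ {a b}, r a b → r b a)
    (htr : ∀ {a b c}, r a b → r b c → r a c)
    (hinv : ∀ g ∈ G, ∀ a b, r a b → r (g a) (g b))
    (a₀ b₀ : Ω) (hne : a₀ ≠ b₀) (hr : r a₀ b₀) : ∀ a b, r a b := by
  classical
  set B : Set Ω := {w | r a₀ w} with hB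
  have hsm : ∀ g ∈ G, g • B = {w | r (g a₀) w} := by
    intro g hg
    ext w
    constructor
    · rintro ⟨u, hu, rfl⟩
      exact hinv g hg _ _ hu
    · intro hw
      refine ⟨g⁻¹ w, ?_, by simp⟩
      have := hinv g⁻¹ (inv_mem hg) _ _ hw
      simpa [hB] using this
  have hblock : ∀ g ∈ G, g • B = B ∨ (g • B) ∩ B = ∅ := by
    intro g hg
    rw [hsm g hg]
    by_cases hc : r a₀ (g a₀)
    · left
      ext w
      exact ⟨fun hw => htr hc hw, fun hw => htr (hsymm hc) hw⟩
    · right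
      ext w
      simp only [Set.mem_inter_iff, Set.mem_setOf_eq, Set.mem_empty_iff_false, iff_false,
        not_and]
      intro h1 h2
      exact hc (htr h2 (hsymm h1))
  rcases hprim B hblock with h | ⟨a, ha⟩ | h
  · exact absurd (show a₀ ∈ B from hrefl a₀) (by rw [h]; exact Set.notMem_empty a₀)
  · exfalso
    have h1 : a₀ ∈ B := hrefl a₀
    have h2 : b₀ ∈ B := hr
    rw [ha] at h1 h2
    exact hne (h1.trans h2.symm)
  · have hall : ∀ w, r a₀ w := fun w => by
      have : w ∈ B := by rw [h]; trivial
      exact this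
    exact fun a b => htr (hsymm (hall a)) (hall b)

section Good
variable (G : Subgroup (Equiv.Perm Ω))

/-- `Good G a b c`: `a,b,c` are pairwise distinct and the 3-cycle `(a b c)` is in `G`. -/
def Good (a b c : Ω) : Prop := a ≠ b ∧ b ≠ c ∧ a ≠ c ∧ cyc3 a b c ∈ G

variable {G}

lemma Good.rot {a b c : Ω} (h : Good G a b c) : Good G b c a :=
  ⟨h.2.1, (h.2.2.1).symm, (h.1).symm, by rw [← cyc3_rot h.1 h.2.1 h.2.2.1]; exact h.2.2.2⟩

lemma Good.cba {a b c : Ω} (h : Good G a b c) : Good G c b a :=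
  ⟨(h.2.1).symm, (h.1).symm, (h.2.2.1).symm, by rw [← cyc3_inv]; exact inv_mem h.2.2.2⟩

lemma Good.swap12 {a b c : Ω} (h : Good G a b c) : Good G b a c := h.rot.rot.cba

lemma Good.swap23 {a b c : Ω} (h : Good G a b c) : Good G a c b := h.cba.rot.rot

lemma Good.swap13 {a b c : Ω} (h : Good G a b c) : Good G c b a := h.cba

lemma Good.conj {a b c : Ω} {g : Equiv.Perm Ω} (hg : g ∈ G) (h : Good G a b c) :
    Good G (g a) (g b) (g c) := by
  refine ⟨fun e => h.1 (g.injective e), fun e => h.2.1 (g.injective e),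
    fun e => h.2.2.1 (g.injective e), ?_⟩
  rw [← cyc3_conj]
  exact mul_mem (mul_mem hg h.2.2.2) (inv_mem hg)

/-- From a single 3-cycle in `G`, all 3-cycles are in `G`. -/
lemma all_cyc3_of_seed
    (hprim : ∀ B : Set Ω, (∀ g ∈ G, g • B = B ∨ (g • B) ∩ B = ∅) →
        B = ∅ ∨ (∃ a : Ω, B = {a}) ∨ B = Set.univ)
    (p q s : Ω) (hseed : Good G p q s) :
    ∀ a b c : Ω, a ≠ b → b ≠ c → a ≠ c → Good G a b c := by
  classical
  set r : Ω → Ω → Prop := fun a b => a = b ∨ ∃ u, Good G a b u with hrdef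
  have hrefl : ∀ a, r a a := fun a => Or.inl rfl
  have hsymm : ∀ {a b}, r a b → r b a := by
    rintro a b (rfl | ⟨u, hu⟩)
    · exact Or.inl rfl
    · exact Or.inr ⟨u, hu.swap12⟩
  have htr : ∀ {a b c}, r a b → r b c → r a c := by
    rintro a b c (rfl | ⟨u, hu⟩) hbc
    · exact hbc
    rcases hbc with rfl | ⟨v, hv⟩
    · exact Or.inr ⟨u, hu⟩
    by_cases hac : a = c
    · exact Or.inl hac
    right
    -- have hu : Good G a b u, hv : Good G b c v, a ≠ c
    by_cases huc : u = c
    · exact ⟨b, (huc ▸ hu).swap23⟩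
    by_cases hva : v = a
    · -- Good b c a : contains a and c already
      exact ⟨b, (hva ▸ hv).rot.rot.swap23⟩
    · -- main case : conjugate Good a b u by the 3-cycle (b c v)
      have hva' : a ≠ v := fun e => hva e.symm
      have τmem : cyc3 b c v ∈ G := hv.2.2.2
      have key := hu.conj τmem
      have ea : cyc3 b c v a = a := cyc3_apply_of_ne hu.1 hac hva'
      have eb : cyc3 b c v b = c := cyc3_apply_left hv.1 hv.2.2.1
      rw [ea, eb] at key
      by_cases huv : u = v
      · subst huv
        rw [cyc3_apply_right] at key
        exact ⟨b, key⟩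
      · rw [cyc3_apply_of_ne (Ne.symm hu.2.1) huc huv] at key
        exact ⟨u, key⟩
  have hinv : ∀ g ∈ G, ∀ a b, r a b → r (g a) (g b) := by
    rintro g hg a b (rfl | ⟨u, hu⟩)
    · exact Or.inl rfl
    · exact Or.inr ⟨g u, hu.conj hg⟩
  have hall : ∀ a b, r a b :=
    rel_univ G hprim r hrefl hsymm htr hinv p q hseed.1 (Or.inr ⟨s, hseed⟩)
  -- now derive exact triples
  intro a b c hab hbc hac
  rcases hall a b with rfl | ⟨u, hu⟩
  · exact absurd rfl hab
  by_cases huc : u = c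
  · exact huc ▸ hu
  rcases hall u c with rfl | ⟨v, hv⟩
  · exact absurd rfl huc
  -- hv : Good G u c v
  by_cases hva : v = a
  · -- use ρ = cyc3 a c u, conjugating Good a b u
    have hv' : Good G u c a := hva ▸ hv
    have key := hu.conj hv'.cba.2.2.2
    rw [cyc3_apply_left hac hu.2.2.1, cyc3_apply_right,
      cyc3_apply_of_ne (Ne.symm hu.1) hbc hu.2.1] at key
    exact key.cba
  by_cases hvb : v = b
  · -- use ρ = cyc3 u b c
    have hv' : Good G u c b := hvb ▸ hv
    have key := hu.conj hv'.swap23.2.2.2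
    rw [cyc3_apply_of_ne hu.2.2.1 hab hac,
      cyc3_apply_mid (Ne.symm huc) (Ne.symm hbc),
      cyc3_apply_left (Ne.symm hu.2.1) huc] at key
    exact key.swap23
  · -- use ρ = cyc3 u c v
    have key := hu.conj hv.2.2.2
    rw [cyc3_apply_of_ne hu.2.2.1 hac (fun e => hva e.symm),
      cyc3_apply_of_ne hu.2.1 hbc (fun e => hvb e.symm),
      cyc3_apply_left huc hv.2.2.1] at key
    exact key
end Good

section Swap
variable {G : Subgroup (Equiv.Perm Ω)}

/-- From a single transposition in `G`, all transpositions are in `G`. -/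
lemma all_swap_of_seed
    (hprim : ∀ B : Set Ω, (∀ g ∈ G, g • B = B ∨ (g • B) ∩ B = ∅) →
        B = ∅ ∨ (∃ a : Ω, B = {a}) ∨ B = Set.univ)
    (p q : Ω) (hpq : p ≠ q) (hseed : Equiv.swap p q ∈ G) :
    ∀ a b : Ω, Equiv.swap a b ∈ G := by
  classical
  set r : Ω → Ω → Prop := fun a b => Equiv.swap a b ∈ G with hrdef
  have hrefl : ∀ a, r a a := fun a => by
    simp only [hrdef, Equiv.swap_self]
    exact (show (1 : Equiv.Perm Ω) ∈ G from one_mem G)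
  have hsymm : ∀ {a b}, r a b → r b a := by
    intro a b h
    show Equiv.swap b a ∈ G
    rw [Equiv.swap_comm]
    exact h
  have hinv : ∀ g ∈ G, ∀ a b, r a b → r (g a) (g b) := by
    intro g hg a b h
    show Equiv.swap (g a) (g b) ∈ G
    rw [Equiv.swap_apply_apply g a b]
    exact mul_mem (mul_mem hg h) (inv_mem hg)
  have htr : ∀ {a b c}, r a b → r b c → r a c := by
    intro a b c hab hbc
    by_cases h1 : a = c
    · subst h1; exact hrefl a
    by_cases h2 : a = b
    · subst h2; exact hbc
    by_cases h3 : b = c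
    · subst h3; exact hab
    · have := hinv _ hbc a b hab
      rwa [Equiv.swap_apply_of_ne_of_ne h2 h1, Equiv.swap_apply_left] at this
  have hall := rel_univ G hprim r hrefl hsymm htr hinv p q hpq hseed
  exact hall
end Swap

section PartI
variable {G : Subgroup (Equiv.Perm Ω)}

/-- Every pair of distinct points can be simultaneously moved into the support of `x`. -/
lemma exists_compress
    (hprim : ∀ B : Set Ω, (∀ g ∈ G, g • B = B ∨ (g • B) ∩ B = ∅) →
        B = ∅ ∨ (∃ a : Ω, B = {a}) ∨ B = Set.univ)
    {x : Equiv.Perm Ω} (hxG : x ∈ G) (hx1 : x ≠ 1) :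
    ∀ u v : Ω, u ≠ v → ∃ g ∈ G, x (g u) ≠ g u ∧ x (g v) ≠ g v := by
  classical
  intro u v huv
  by_contra hcon
  push_neg at hcon
  -- N w = neighbours of w in the (undirected) orbital graph of (u,v)
  set N : Ω → Set Ω := fun w => {w' | ∃ g ∈ G, (g u = w ∧ g v = w') ∨ (g v = w ∧ g u = w')}
    with hN
  have hNequiv : ∀ g ∈ G, ∀ w, N (g w) = g '' (N w) := by
    intro g hg w
    ext w'
    constructor
    · rintro ⟨h, hh, ⟨h1, h2⟩ | ⟨h1, h2⟩⟩
      · refine ⟨(g⁻¹ * h) v, ⟨g⁻¹ * h, mul_mem (inv_mem hg) hh, Or.inl ⟨?_, rfl⟩⟩, ?_⟩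
        · simp [Equiv.Perm.mul_apply, h1]
        · simp [Equiv.Perm.mul_apply, h2]
      · refine ⟨(g⁻¹ * h) u, ⟨g⁻¹ * h, mul_mem (inv_mem hg) hh, Or.inr ⟨?_, rfl⟩⟩, ?_⟩
        · simp [Equiv.Perm.mul_apply, h1]
        · simp [Equiv.Perm.mul_apply, h2]
    · rintro ⟨w'', ⟨h, hh, ⟨h1, h2⟩ | ⟨h1, h2⟩⟩, rfl⟩
      · exact ⟨g * h, mul_mem hg hh, Or.inl ⟨by simp [Equiv.Perm.mul_apply, h1],
          by simp [Equiv.Perm.mul_apply, h2]⟩⟩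
      · exact ⟨g * h, mul_mem hg hh, Or.inr ⟨by simp [Equiv.Perm.mul_apply, h1],
          by simp [Equiv.Perm.mul_apply, h2]⟩⟩
  -- if w is in the support, none of its neighbours is
  have hNd : ∀ w, x w ≠ w → ∀ w' ∈ N w, x w' = w' := by
    rintro w hw w' ⟨g, hg, ⟨h1, h2⟩ | ⟨h1, h2⟩⟩
    · subst h1; subst h2; exact hcon g hg hw
    · subst h1; subst h2
      by_contra hne
      exact hw (hcon g hg hne)
  -- hence for w in the support, N (x w) = N w
  have hNfix : ∀ w, x w ≠ w → N (x w) = N w := by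
    intro w hw
    rw [hNequiv x hxG w]
    ext w'
    constructor
    · rintro ⟨w'', hw'', rfl⟩
      rwa [hNd w hw w'' hw'']
    · intro hw'
      exact ⟨w', hw', hNd w hw w' hw'⟩
  -- the relation "N w = N w'" is a G-invariant equivalence
  obtain ⟨α, hα⟩ : ∃ α, x α ≠ α := by
    by_contra hc
    push_neg at hc
    exact hx1 (Equiv.ext hc)
  have hall := rel_univ G hprim (fun w w' => N w = N w') (fun _ => rfl)
    (fun h => h.symm) (fun h h' => h.trans h')
    (fun g hg a b h => by show N (g a) = N (g b); rw [hNequiv g hg, hNequiv g hg, h])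
    α (x α) (Ne.symm hα) (hNfix α hα).symm
  -- contradiction : v ∈ N u = N v, but v ∈ N v is impossible
  have hvNu : v ∈ N u := ⟨1, one_mem G, Or.inl ⟨rfl, rfl⟩⟩
  have hvNv : v ∈ N v := by rw [hall v u]; exact hvNu
  rcases hvNv with ⟨g, hg, ⟨h1, h2⟩ | ⟨h1, h2⟩⟩
  · exact huv (g.injective (h1.trans h2.symm))
  · exact huv (g.injective (h2.trans h1.symm))
end PartI

section SOrb
variable (G : Subgroup (Equiv.Perm Ω))

/-- The orbit of `δ` under the stabilizer of `γ` in `G`. -/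
def SOrb (γ δ : Ω) : Set Ω := {w | ∃ g ∈ G, g γ = γ ∧ g δ = w}

variable {G}

lemma self_mem_sorb (γ δ : Ω) : δ ∈ SOrb G γ δ := ⟨1, one_mem G, rfl, rfl⟩

lemma sorb_self (γ : Ω) : SOrb G γ γ = {γ} := by
  ext w
  constructor
  · rintro ⟨g, hg, h1, h2⟩; simp [← h2, h1]
  · rintro rfl; exact self_mem_sorb _ _

lemma sorb_equivariant {p : Equiv.Perm Ω} (hp : p ∈ G) (γ δ : Ω) :
    SOrb G (p γ) (p δ) = p '' SOrb G γ δ := by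
  ext w
  constructor
  · rintro ⟨g, hg, h1, h2⟩
    refine ⟨(p⁻¹ * g * p) δ, ⟨p⁻¹ * g * p, mul_mem (mul_mem (inv_mem hp) hg) hp, ?_, rfl⟩, ?_⟩
    · simp [Equiv.Perm.mul_apply, h1]
    · simp [Equiv.Perm.mul_apply, ← h2]
  · rintro ⟨w', ⟨g, hg, h1, h2⟩, rfl⟩
    exact ⟨p * g * p⁻¹, mul_mem (mul_mem hp hg) (inv_mem hp),
      by simp [Equiv.Perm.mul_apply, h1], by simp [Equiv.Perm.mul_apply, h2]⟩

lemma sorb_trans_finite {γ δ ε : Ω} (h1 : (SOrb G γ δ).Finite) (h2 : (SOrb G δ ε).Finite) :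
    (SOrb G γ ε).Finite := by
  classical
  have hchoice : ∀ d ∈ SOrb G γ δ, ∃ g : Equiv.Perm Ω, g ∈ G ∧ g γ = γ ∧ g δ = d :=
    fun d hd => by obtain ⟨g, hg, hh⟩ := hd; exact ⟨g, hg, hh⟩
  choose! f hf using hchoice
  have hsub : SOrb G γ ε ⊆ ⋃ d ∈ SOrb G γ δ, (f d) '' (SOrb G δ ε) := by
    rintro w ⟨h, hh, e1, e2⟩
    have hd : h δ ∈ SOrb G γ δ := ⟨h, hh, e1, rfl⟩
    obtain ⟨hfG, hfγ, hfδ⟩ := hf (h δ) hd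
    refine Set.mem_biUnion hd ⟨((f (h δ))⁻¹ * h) ε, ⟨(f (h δ))⁻¹ * h,
      mul_mem (inv_mem hfG) hh, ?_, rfl⟩, ?_⟩
    · rw [Equiv.Perm.mul_apply]
      simpa using (congrArg (⇑(f (h δ))⁻¹) hfδ).symm
    · show f (h δ) _ = w
      rw [Equiv.Perm.mul_apply, Equiv.Perm.apply_inv_self, e2]
  exact (h1.biUnion (fun d _ => h2.image _)).subset hsub

end SOrb

section Suborbit
variable {G : Subgroup (Equiv.Perm Ω)}

lemma tset_finite
    (hprim : ∀ B : Set Ω, (∀ g ∈ G, g • B = B ∨ (g • B) ∩ B = ∅) →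
        B = ∅ ∨ (∃ a : Ω, B = {a}) ∨ B = Set.univ)
    {x : Equiv.Perm Ω} (hxG : x ∈ G) (hx1 : x ≠ 1)
    (hxfin : {ω : Ω | x ω ≠ ω}.Finite) (α : Ω) :
    {δ : Ω | (SOrb G α δ).Finite}.Finite := by
  classical
  set S : Set Ω := {ω : Ω | x ω ≠ ω} with hS
  set A : Ω × Ω → Set Ω := fun p => {τ | ∃ g ∈ G, g α = p.1 ∧ g τ = p.2} with hA
  set T : Set Ω := {δ : Ω | (SOrb G α δ).Finite} with hT
  have claim1 : ∀ τ, τ ≠ α → ∃ p ∈ S ×ˢ S, τ ∈ A p := by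
    intro τ hτ
    obtain ⟨g, hg, h1, h2⟩ := exists_compress hprim hxG hx1 α τ (Ne.symm hτ)
    exact ⟨(g α, g τ), ⟨h1, h2⟩, g, hg, rfl, rfl⟩
  have claim2 : ∀ p : Ω × Ω, ∀ τ₁ ∈ A p, ∀ τ₂ ∈ A p, τ₂ ∈ SOrb G α τ₁ := by
    rintro p τ₁ ⟨g₁, hg₁, e1, e2⟩ τ₂ ⟨g₂, hg₂, e3, e4⟩
    refine ⟨g₂⁻¹ * g₁, mul_mem (inv_mem hg₂) hg₁, ?_, ?_⟩
    · rw [Equiv.Perm.mul_apply, e1, ← e3, Equiv.Perm.inv_apply_self]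
    · rw [Equiv.Perm.mul_apply, e2, ← e4, Equiv.Perm.inv_apply_self]
  have hsub : T ⊆ {α} ∪ ⋃ p ∈ S ×ˢ S, (A p ∩ T) := by
    intro τ hτ
    by_cases h : τ = α
    · exact Or.inl h
    · obtain ⟨p, hp, hAp⟩ := claim1 τ h
      exact Or.inr (Set.mem_biUnion hp ⟨hAp, hτ⟩)
  refine ((Set.finite_singleton α).union ((hxfin.prod hxfin).biUnion ?_)).subset hsub
  intro p _
  by_cases hne : (A p ∩ T).Nonempty
  · obtain ⟨τ₁, hτ₁A, hτ₁T⟩ := hne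
    exact hτ₁T.subset (fun τ₂ hτ₂ => claim2 p τ₁ hτ₁A τ₂ (Set.mem_of_mem_inter_left hτ₂))
  · rw [Set.not_nonempty_iff_eq_empty] at hne
    rw [hne]
    exact Set.finite_empty

lemma suborbits_infinite [Infinite Ω]
    (htrans : ∀ a b : Ω, ∃ g ∈ G, g a = b)
    (hprim : ∀ B : Set Ω, (∀ g ∈ G, g • B = B ∨ (g • B) ∩ B = ∅) →
        B = ∅ ∨ (∃ a : Ω, B = {a}) ∨ B = Set.univ)
    {x : Equiv.Perm Ω} (hxG : x ∈ G) (hx1 : x ≠ 1)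
    (hxfin : {ω : Ω | x ω ≠ ω}.Finite) :
    ∀ γ δ : Ω, δ ≠ γ → (SOrb G γ δ).Infinite := by
  classical
  intro γ₀ δ₀ hne₀
  by_contra hfin₀
  rw [Set.not_infinite] at hfin₀
  -- the symmetric relation `both suborbits finite`
  set r : Ω → Ω → Prop := fun a b => (SOrb G a b).Finite ∧ (SOrb G b a).Finite with hr
  have hrefl : ∀ a, r a a := fun a => by
    constructor <;> (rw [sorb_self]; exact Set.finite_singleton a)
  have hsymm : ∀ {a b}, r a b → r b a := fun h => ⟨h.2, h.1⟩
  have htr : ∀ {a b c}, r a b → r b c → r a c := fun h1 h2 =>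
    ⟨sorb_trans_finite h1.1 h2.1, sorb_trans_finite h2.2 h1.2⟩
  have hinv : ∀ g ∈ G, ∀ a b, r a b → r (g a) (g b) := by
    intro g hg a b h
    constructor
    · rw [sorb_equivariant hg]; exact h.1.image _
    · rw [sorb_equivariant hg]; exact h.2.image _
  by_cases hseed : ∃ a b : Ω, a ≠ b ∧ r a b
  · -- then all suborbits are finite, so Ω is finite: contradiction
    obtain ⟨a, b, hab, hrab⟩ := hseed
    have hall := rel_univ G hprim r hrefl hsymm htr hinv a b hab hrab
    have : (Set.univ : Set Ω) ⊆ {δ : Ω | (SOrb G a δ).Finite} :=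
      fun w _ => (hall a w).1
    exact Set.infinite_univ ((tset_finite hprim hxG hx1 hxfin a).subset this)
  · -- no symmetric pair : build an infinite strictly descending chain in a finite set
    push_neg at hseed
    have hW : ∀ c : Ω, ∃ d, d ≠ c ∧ (SOrb G c d).Finite := by
      intro c
      obtain ⟨g, hg, hgc⟩ := htrans γ₀ c
      refine ⟨g δ₀, fun e => hne₀ (g.injective (e.trans hgc.symm)), ?_⟩
      rw [← hgc, sorb_equivariant hg]
      exact hfin₀.image _
    choose f hf1 hf2 using hW
    set u : ℕ → Ω := fun n => f^[n] γ₀ with hu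
    have hustep : ∀ n, u (n + 1) = f (u n) := fun n => Function.iterate_succ_apply' f n γ₀
    have hchain : ∀ k l, k ≤ l → (SOrb G (u k) (u l)).Finite := by
      intro k l hkl
      induction l, hkl using Nat.le_induction with
      | base => rw [sorb_self]; exact Set.finite_singleton _
      | succ n hn ih =>
        rw [hustep]
        exact sorb_trans_finite ih (hf2 (u n))
    have humem : ∀ n, u n ∈ {δ : Ω | (SOrb G (u 0) δ).Finite} :=
      fun n => hchain 0 n (Nat.zero_le n)
    have hTfin := tset_finite hprim hxG hx1 hxfin (u 0)
    -- pigeonhole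
    have : ∃ m n : ℕ, m ≠ n ∧ u m = u n := by
      by_contra hc
      push_neg at hc
      have hinj : Function.Injective u := fun m n e => by
        by_contra hmn
        exact hc m n hmn e
      exact Set.infinite_of_injective_forall_mem hinj humem hTfin
    obtain ⟨m, n, hmn, hmeq⟩ := this
    rcases Nat.lt_or_ge m n with h | h
    · have h1 : (SOrb G (u m) (u (m+1))).Finite := by
        rw [hustep]; exact hf2 (u m)
      have h2 : (SOrb G (u (m+1)) (u m)).Finite := by
        rw [hmeq]
        exact hchain (m+1) n h
      have hne : u (m+1) ≠ u m := by rw [hustep]; exact hf1 (u m)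
      exact hseed _ _ hne ⟨h2, h1⟩
    · have h' : n < m := lt_of_le_of_ne h (Ne.symm hmn)
      have h1 : (SOrb G (u n) (u (n+1))).Finite := by
        rw [hustep]; exact hf2 (u n)
      have h2 : (SOrb G (u (n+1)) (u n)).Finite := by
        rw [← hmeq]
        exact hchain (n+1) m h'
      have hne : u (n+1) ≠ u n := by rw [hustep]; exact hf1 (u n)
      exact hseed _ _ hne ⟨h2, h1⟩
end Suborbit


lemma neumann {H : Type*} [Group H] [MulAction H Ω] (A B : Set Ω) (hA : A.Finite) (hB : B.Finite)
    (horb : ∀ a ∈ A, (MulAction.orbit H a : Set Ω).Infinite) :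
    ∃ h : H, ∀ a ∈ A, ∀ b ∈ B, h • a ≠ b := by
  classical
  by_contra hcon
  push_neg at hcon
  set K : Ω × Ω → Subgroup H := fun p => MulAction.stabilizer H p.1 with hK
  set g : Ω × Ω → H := fun p =>
    if h : ∃ h : H, h • p.1 = p.2 then h.choose else 1 with hg
  have hcovers : ⋃ p ∈ hA.toFinset ×ˢ hB.toFinset, (g p) • (K p : Set H) = Set.univ := by
    rw [Set.eq_univ_iff_forall]
    intro h
    obtain ⟨a, ha, b, hb, hab⟩ := hcon h
    have hex : ∃ h' : H, h' • (a, b).1 = (a, b).2 := ⟨h, hab⟩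
    have hmem : (a, b) ∈ hA.toFinset ×ˢ hB.toFinset := Finset.mem_product.mpr
      ⟨hA.mem_toFinset.mpr ha, hB.mem_toFinset.mpr hb⟩
    refine Set.mem_biUnion hmem ?_
    rw [mem_leftCoset_iff]
    have hgp : g (a, b) • a = b := by
      rw [hg]; simp only [dif_pos hex]; exact hex.choose_spec
    show (g (a,b))⁻¹ * h ∈ MulAction.stabilizer H a
    rw [MulAction.mem_stabilizer_iff, mul_smul, hab]
    exact inv_smul_eq_iff.mpr hgp.symm
  obtain ⟨p, hp, hfi⟩ := Subgroup.exists_finiteIndex_of_leftCoset_cover hcovers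
  have ha : p.1 ∈ A := hA.mem_toFinset.mp (Finset.mem_product.mp hp).1
  haveI := hfi
  have : Finite (H ⧸ MulAction.stabilizer H p.1) := Subgroup.finite_quotient_of_finiteIndex
  have : Finite (MulAction.orbit H p.1) :=
    Finite.of_equiv _ (MulAction.orbitEquivQuotientStabilizer H p.1).symm
  exact horb p.1 ha (Set.finite_coe_iff.mp this)

section Seed
variable {G : Subgroup (Equiv.Perm Ω)}

lemma sorb_eq_orbit (G : Subgroup (Equiv.Perm Ω)) (γ a : Ω) :
    MulAction.orbit ↥(G ⊓ MulAction.stabilizer (Equiv.Perm Ω) γ) a = SOrb G γ a := by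
  ext w
  constructor
  · rintro ⟨⟨g, hg⟩, rfl⟩
    rw [Subgroup.mem_inf] at hg
    exact ⟨g, hg.1, hg.2, rfl⟩
  · rintro ⟨g, hg, h1, h2⟩
    exact ⟨⟨g, Subgroup.mem_inf.mpr ⟨hg, h1⟩⟩, h2⟩

lemma exists_sep [Infinite Ω]
    (htrans : ∀ a b : Ω, ∃ g ∈ G, g a = b)
    (hprim : ∀ B : Set Ω, (∀ g ∈ G, g • B = B ∨ (g • B) ∩ B = ∅) →
        B = ∅ ∨ (∃ a : Ω, B = {a}) ∨ B = Set.univ)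
    {x : Equiv.Perm Ω} (hxG : x ∈ G) (hx1 : x ≠ 1)
    (hxfin : {ω : Ω | x ω ≠ ω}.Finite) (γ : Ω) (A B : Set Ω)
    (hA : A.Finite) (hB : B.Finite) (hγA : ∀ a ∈ A, a ≠ γ) :
    ∃ g ∈ G, g γ = γ ∧ ∀ a ∈ A, ∀ b ∈ B, g a ≠ b := by
  obtain ⟨h, hsep⟩ := neumann (H := ↥(G ⊓ MulAction.stabilizer (Equiv.Perm Ω) γ)) A B hA hB
    (fun a ha => by
      rw [sorb_eq_orbit]
      exact suborbits_infinite htrans hprim hxG hx1 hxfin γ a (hγA a ha))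
  have hmem := h.property
  rw [Subgroup.mem_inf] at hmem
  exact ⟨h.val, hmem.1, hmem.2, hsep⟩

lemma exists_seed [Infinite Ω]
    (htrans : ∀ a b : Ω, ∃ g ∈ G, g a = b)
    (hprim : ∀ B : Set Ω, (∀ g ∈ G, g • B = B ∨ (g • B) ∩ B = ∅) →
        B = ∅ ∨ (∃ a : Ω, B = {a}) ∨ B = Set.univ)
    {x : Equiv.Perm Ω} (hxG : x ∈ G) (hx1 : x ≠ 1)
    (hxfin : {ω : Ω | x ω ≠ ω}.Finite) :
    (∃ p q : Ω, p ≠ q ∧ Equiv.swap p q ∈ G) ∨ (∃ p q s : Ω, Good G p q s) := by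
  classical
  obtain ⟨γ, hγ⟩ : ∃ γ, x γ ≠ γ := by
    by_contra hc
    push_neg at hc
    exact hx1 (Equiv.ext hc)
  set A : Set Ω := {ω : Ω | x ω ≠ ω} \ {γ} with hAdef
  have hA : A.Finite := hxfin.diff
  obtain ⟨h, hhG, hhγ, hsep⟩ := exists_sep htrans hprim hxG hx1 hxfin γ A A hA hA
    (fun a ha => ha.2)
  have hhiγ : h⁻¹ γ = γ := by
    conv_lhs => rw [← hhγ]
    exact Equiv.Perm.inv_apply_self h γ
  set y : Equiv.Perm Ω := h * x * h⁻¹ with hydef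
  have hyG : y ∈ G := mul_mem (mul_mem hhG hxG) (inv_mem hhG)
  have hyap : ∀ w, y w = h (x (h⁻¹ w)) := fun w => rfl
  have hyγ : y γ ≠ γ := by
    rw [hyap, hhiγ]
    intro e
    exact hγ (h.injective (e.trans hhγ.symm))
  -- the supports of x and y intersect exactly in γ
  have overlap : ∀ w, x w ≠ w → y w ≠ w → w = γ := by
    intro w hxw hyw
    by_contra hwγ
    have hxa : x (h⁻¹ w) ≠ h⁻¹ w := by
      intro e
      apply hyw
      rw [hyap, e, Equiv.Perm.apply_inv_self]
    by_cases haγ : h⁻¹ w = γ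
    · apply hwγ
      rw [← hhγ, ← haγ, Equiv.Perm.apply_inv_self]
    · exact hsep (h⁻¹ w) ⟨hxa, haγ⟩ w ⟨hxw, hwγ⟩ (Equiv.Perm.apply_inv_self h w)
  set a : Ω := x⁻¹ γ with hadef
  have hxa : x a = γ := Equiv.Perm.apply_inv_self x γ
  have haγ : a ≠ γ := by
    intro e
    rw [e] at hxa
    exact hγ hxa
  have hxamoves : x a ≠ a := by rw [hxa]; exact Ne.symm haγ
  have hya : y a = a := by
    by_contra hc
    exact haγ (overlap a hxamoves hc)
  set b : Ω := y⁻¹ γ with hbdef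
  have hyb : y b = γ := Equiv.Perm.apply_inv_self y γ
  have hbγ : b ≠ γ := by
    intro e
    rw [e] at hyb
    exact hyγ hyb
  have hybmoves : y b ≠ b := by rw [hyb]; exact Ne.symm hbγ
  have hxb : x b = b := by
    by_contra hc
    exact hbγ (overlap b hc hybmoves)
  have hab : a ≠ b := by
    intro e
    rw [e] at hxamoves
    exact hxamoves hxb
  set z : Equiv.Perm Ω := x⁻¹ * y⁻¹ * x * y with hzdef
  have hzG : z ∈ G := mul_mem (mul_mem (mul_mem (inv_mem hxG) (inv_mem hyG)) hxG) hyG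
  have hzap : ∀ w, z w = x⁻¹ (y⁻¹ (x (y w))) := fun w => rfl
  have hxib : x⁻¹ b = b := by rw [← hxb, Equiv.Perm.inv_apply_self, hxb]
  have hxiw : ∀ w, x w = w → x⁻¹ w = w := fun w e => by
    rw [← e, Equiv.Perm.inv_apply_self, e]
  have hyiw : ∀ w, y w = w → y⁻¹ w = w := fun w e => by
    rw [← e, Equiv.Perm.inv_apply_self, e]
  have hza : z a = b := by
    rw [hzap, hya, hxa, ← hbdef, hxib]
  -- z fixes everything outside {γ, a, b}
  have hzfix : ∀ w, w ≠ γ → w ≠ a → w ≠ b → z w = w := by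
    intro w hwγ hwa hwb
    by_cases hxw : x w = w
    · by_cases hyw : y w = w
      · rw [hzap, hyw, hxw, hyiw w hyw, hxiw w hxw]
      · -- y moves w, x fixes w
        have h1 : y (y w) ≠ y w := fun e => hyw (y.injective e)
        have h2 : y w ≠ γ := by
          intro e
          apply hwb
          rw [hbdef, ← e, Equiv.Perm.inv_apply_self]
        have h3 : x (y w) = y w := by
          by_contra hc
          exact h2 (overlap (y w) hc h1)
        rw [hzap, h3, Equiv.Perm.inv_apply_self, hxiw w hxw]
    · by_cases hyw : y w = w
      · -- x moves w, y fixes w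
        have h1 : x (x w) ≠ x w := fun e => hxw (x.injective e)
        have h2 : x w ≠ γ := by
          intro e
          apply hwa
          rw [hadef, ← e, Equiv.Perm.inv_apply_self]
        have h3 : y (x w) = x w := by
          by_contra hc
          exact h2 (overlap (x w) h1 hc)
        rw [hzap, hyw, hyiw _ h3, Equiv.Perm.inv_apply_self]
      · exact absurd (overlap w hxw hyw) hwγ
  -- z maps the triple {γ, a, b} into itself
  have hztriple : ∀ w, (w = γ ∨ w = a ∨ w = b) → z w = γ ∨ z w = a ∨ z w = b := by
    intro w hw
    by_contra hc
    push_neg at hc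
    have : z (z w) = z w := hzfix (z w) hc.1 hc.2.1 hc.2.2
    have h2 : z w = w := z.injective this
    rcases hw with e | e | e
    · exact hc.1 (h2.trans e)
    · exact hc.2.1 (h2.trans e)
    · exact hc.2.2 (h2.trans e)
  -- classify z
  have hzb : z b = γ ∨ z b = a := by
    rcases hztriple b (Or.inr (Or.inr rfl)) with e | e | e
    · exact Or.inl e
    · exact Or.inr e
    · exfalso
      exact hab (z.injective (hza.trans e.symm))
  rcases hzb with hzb | hzb
  · -- z is the 3-cycle (γ a b)
    right
    have hzγ : z γ = a := by
      rcases hztriple γ (Or.inl rfl) with e | e | e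
      · exact absurd (z.injective (e.trans hzb.symm)) (Ne.symm hbγ)
      · exact e
      · exact absurd (z.injective (e.trans hza.symm)) (Ne.symm haγ)
    have hzeq : z = cyc3 γ a b := by
      ext w
      by_cases e1 : w = γ
      · rw [e1, hzγ, cyc3_apply_left (Ne.symm haγ) (Ne.symm hbγ)]
      by_cases e2 : w = a
      · rw [e2, hza, cyc3_apply_mid hbγ (Ne.symm hab)]
      by_cases e3 : w = b
      · rw [e3, hzb, cyc3_apply_right]
      · rw [hzfix w e1 e2 e3, cyc3_apply_of_ne e1 e2 e3]
    exact ⟨γ, a, b, Ne.symm haγ, hab, Ne.symm hbγ, hzeq ▸ hzG⟩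
  · -- z is the transposition (a b)
    left
    refine ⟨a, b, hab, ?_⟩
    have hzγ : z γ = γ := by
      rcases hztriple γ (Or.inl rfl) with e | e | e
      · exact e
      · exact absurd (z.injective (e.trans hzb.symm)) (Ne.symm hbγ)
      · exact absurd (z.injective (e.trans hza.symm)) (Ne.symm haγ)
    have hzeq : z = Equiv.swap a b := by
      ext w
      by_cases e2 : w = a
      · rw [e2, hza, Equiv.swap_apply_left]
      by_cases e3 : w = b
      · rw [e3, hzb, Equiv.swap_apply_right]
      by_cases e1 : w = γ
      · rw [e1, hzγ, Equiv.swap_apply_of_ne_of_ne (Ne.symm haγ) (Ne.symm hbγ)]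
      · rw [hzfix w e1 e2 e3, Equiv.swap_apply_of_ne_of_ne e2 e3]
    exact hzeq ▸ hzG
end Seed


end WielandtAux

theorem wielandt_three_cycles {Ω : Type*} [Infinite Ω] [DecidableEq Ω]
    (G : Subgroup (Equiv.Perm Ω))
    (htrans : ∀ a b : Ω, ∃ g ∈ G, g a = b)
    (hprim : ∀ B : Set Ω, (∀ g ∈ G, g • B = B ∨ (g • B) ∩ B = ∅) →
        B = ∅ ∨ (∃ a : Ω, B = {a}) ∨ B = Set.univ)
    (x : Equiv.Perm Ω) (hxG : x ∈ G) (hx1 : x ≠ 1)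
    (hxfin : {ω : Ω | x ω ≠ ω}.Finite) :
    ∀ a b c : Ω, a ≠ b → b ≠ c → a ≠ c →
      Equiv.swap a b * Equiv.swap b c ∈ G := by
  intro a b c hab hbc hac
  rcases WielandtAux.exists_seed htrans hprim hxG hx1 hxfin with
    ⟨p, q, hpq, hswap⟩ | ⟨p, q, s, hgood⟩
  · have hall := WielandtAux.all_swap_of_seed hprim p q hpq hswap
    exact mul_mem (hall a b) (hall b c)
  · exact (WielandtAux.all_cyc3_of_seed hprim p q s hgood a b c hab hbc hac).2.2.2
end

section
/- Let G be a group acting on a set Ω, let k be a natural number with k ≥ 1, and suppose |Ω| ≥ 2k (as cardinal numbers). Then the number of orbits of G on the set of (k−1)-element subsets of Ω is at most the number of orbits of G on the set of k-element subsets of Ω, where these numbers of orbits are the cardinalities of the quotients of the respective sets of finite subsets by the orbit equivalence relation. -/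
open Finset in
lemma lw_sum_a {α : Type*} [DecidableEq α] (m : ℕ) (Ω₀ : Finset α) (g : Finset α → ℝ) :
    ∑ B ∈ Ω₀.powersetCard (m + 2), ∑ b ∈ B, (g (B.erase b))^2
      = ∑ A ∈ Ω₀.powersetCard (m + 1), ((Ω₀.card - (m+1) : ℕ) : ℝ) * (g A)^2 := by
  rw [Finset.sum_sigma' (Ω₀.powersetCard (m+2)) (fun B => B) (fun B b => (g (B.erase b))^2)]
  have : ∑ A ∈ Ω₀.powersetCard (m + 1), ((Ω₀.card - (m+1) : ℕ) : ℝ) * (g A)^2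
      = ∑ p ∈ (Ω₀.powersetCard (m+1)).sigma (fun A => Ω₀ \ A), (g p.1)^2 := by
    rw [← Finset.sum_sigma' (Ω₀.powersetCard (m+1)) (fun A => Ω₀ \ A) (fun A _ => (g A)^2)]
    refine Finset.sum_congr rfl fun A hA => ?_
    rw [Finset.sum_const, nsmul_eq_mul, Finset.card_sdiff_of_subset (Finset.mem_powersetCard.1 hA).1,
      (Finset.mem_powersetCard.1 hA).2]
  rw [this]
  refine Finset.sum_nbij' (fun p => ⟨p.1.erase p.2, p.2⟩) (fun q => ⟨insert q.2 q.1, q.2⟩)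
    ?_ ?_ ?_ ?_ ?_
  · rintro ⟨B, b⟩ hp
    simp only [Finset.mem_sigma, Finset.mem_powersetCard] at hp ⊢
    obtain ⟨⟨hBΩ, hBcard⟩, hb⟩ := hp
    refine ⟨⟨(Finset.erase_subset _ _).trans hBΩ, by rw [Finset.card_erase_of_mem hb, hBcard]; omega⟩, ?_⟩
    simp [Finset.mem_sdiff, hBΩ hb]
  · rintro ⟨A, x⟩ hq
    simp only [Finset.mem_sigma, Finset.mem_powersetCard, Finset.mem_sdiff] at hq ⊢
    obtain ⟨⟨hAΩ, hAcard⟩, hx, hxA⟩ := hq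
    exact ⟨⟨Finset.insert_subset hx hAΩ, by rw [Finset.card_insert_of_notMem hxA, hAcard]⟩,
      Finset.mem_insert_self _ _⟩
  · rintro ⟨B, b⟩ hp
    simp only [Finset.mem_sigma, Finset.mem_powersetCard] at hp
    simp [Finset.insert_erase hp.2]
  · rintro ⟨A, x⟩ hq
    simp only [Finset.mem_sigma, Finset.mem_powersetCard, Finset.mem_sdiff] at hq
    simp [Finset.erase_insert hq.2.2]
  · rintro ⟨B, b⟩ _; rfl

lemma lw_sum_b {α : Type*} [DecidableEq α] (m : ℕ) (Ω₀ : Finset α) (g : Finset α → ℝ) :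
    ∑ C ∈ Ω₀.powersetCard m, ∑ x ∈ Ω₀ \ C, (g (insert x C))^2
      = ∑ A ∈ Ω₀.powersetCard (m + 1), ((m+1 : ℕ) : ℝ) * (g A)^2 := by
  rw [Finset.sum_sigma' (Ω₀.powersetCard m) (fun C => Ω₀ \ C) (fun C x => (g (insert x C))^2)]
  have : ∑ A ∈ Ω₀.powersetCard (m + 1), ((m+1 : ℕ) : ℝ) * (g A)^2
      = ∑ p ∈ (Ω₀.powersetCard (m+1)).sigma (fun A => A), (g p.1)^2 := by
    rw [← Finset.sum_sigma' (Ω₀.powersetCard (m+1)) (fun A => A) (fun A _ => (g A)^2)]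
    refine Finset.sum_congr rfl fun A hA => ?_
    rw [Finset.sum_const, nsmul_eq_mul, (Finset.mem_powersetCard.1 hA).2]
  rw [this]
  refine Finset.sum_nbij' (fun p => ⟨insert p.2 p.1, p.2⟩) (fun q => ⟨q.1.erase q.2, q.2⟩)
    ?_ ?_ ?_ ?_ ?_
  · rintro ⟨C, x⟩ hp
    simp only [Finset.mem_sigma, Finset.mem_powersetCard, Finset.mem_sdiff] at hp ⊢
    obtain ⟨⟨hCΩ, hCcard⟩, hx, hxC⟩ := hp
    exact ⟨⟨Finset.insert_subset hx hCΩ, by rw [Finset.card_insert_of_notMem hxC, hCcard]⟩,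
      Finset.mem_insert_self _ _⟩
  · rintro ⟨A, a⟩ hq
    simp only [Finset.mem_sigma, Finset.mem_powersetCard, Finset.mem_sdiff] at hq ⊢
    obtain ⟨⟨hAΩ, hAcard⟩, ha⟩ := hq
    refine ⟨⟨(Finset.erase_subset _ _).trans hAΩ,
      by rw [Finset.card_erase_of_mem ha, hAcard]; omega⟩, hAΩ ha, Finset.notMem_erase _ _⟩
  · rintro ⟨C, x⟩ hp
    simp only [Finset.mem_sigma, Finset.mem_powersetCard, Finset.mem_sdiff] at hp
    simp [Finset.erase_insert hp.2.2]
  · rintro ⟨A, a⟩ hq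
    simp only [Finset.mem_sigma, Finset.mem_powersetCard] at hq
    simp [Finset.insert_erase hq.2]
  · rintro ⟨C, x⟩ _; rfl


lemma lw_sum_c {α : Type*} [DecidableEq α] (m : ℕ) (Ω₀ : Finset α) (g : Finset α → ℝ) :
    ∑ B ∈ Ω₀.powersetCard (m + 2), ∑ b ∈ B, ∑ b' ∈ B.erase b, g (B.erase b) * g (B.erase b')
      = ∑ C ∈ Ω₀.powersetCard m, ∑ x ∈ Ω₀ \ C, ∑ y ∈ (Ω₀ \ C).erase x,
          g (insert x C) * g (insert y C) := by
  rw [Finset.sum_sigma' (Ω₀.powersetCard (m+2)) (fun B => B)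
    (fun B b => ∑ b' ∈ B.erase b, g (B.erase b) * g (B.erase b'))]
  rw [Finset.sum_sigma' ((Ω₀.powersetCard (m+2)).sigma (fun B => B)) (fun p => p.1.erase p.2)
    (fun p b' => g (p.1.erase p.2) * g (p.1.erase b'))]
  rw [Finset.sum_sigma' (Ω₀.powersetCard m) (fun C => Ω₀ \ C)
    (fun C x => ∑ y ∈ (Ω₀ \ C).erase x, g (insert x C) * g (insert y C))]
  rw [Finset.sum_sigma' ((Ω₀.powersetCard m).sigma (fun C => Ω₀ \ C)) (fun q => (Ω₀ \ q.1).erase q.2)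
    (fun q y => g (insert q.2 q.1) * g (insert y q.1))]
  refine Finset.sum_nbij'
    (fun p => ⟨⟨(p.1.1.erase p.1.2).erase p.2, p.2⟩, p.1.2⟩)
    (fun q => ⟨⟨insert q.2 (insert q.1.2 q.1.1), q.2⟩, q.1.2⟩) ?_ ?_ ?_ ?_ ?_
  · rintro ⟨⟨B, b⟩, b'⟩ hp
    simp only [Finset.mem_sigma, Finset.mem_powersetCard, Finset.mem_sdiff,
      Finset.mem_erase] at hp ⊢
    obtain ⟨⟨⟨hBΩ, hBcard⟩, hb⟩, hb'b, hb'B⟩ := hp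
    refine ⟨⟨⟨(Finset.erase_subset _ _).trans ((Finset.erase_subset _ _).trans hBΩ), ?_⟩,
      hBΩ hb'B, by simp⟩, fun h => hb'b h.symm, hBΩ hb, by simp⟩
    rw [Finset.card_erase_of_mem (Finset.mem_erase.2 ⟨hb'b, hb'B⟩),
      Finset.card_erase_of_mem hb, hBcard]
    omega
  · rintro ⟨⟨C, x⟩, y⟩ hq
    simp only [Finset.mem_sigma, Finset.mem_powersetCard, Finset.mem_sdiff,
      Finset.mem_erase] at hq ⊢
    obtain ⟨⟨⟨hCΩ, hCcard⟩, hx, hxC⟩, hyx, hy, hyC⟩ := hq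
    have hyxC : y ∉ insert x C := by simp [Finset.mem_insert, hyx, hyC]
    refine ⟨⟨⟨Finset.insert_subset hy (Finset.insert_subset hx hCΩ), ?_⟩,
      Finset.mem_insert_self _ _⟩, fun h => hyx h.symm,
      Finset.mem_insert_of_mem (Finset.mem_insert_self _ _)⟩
    rw [Finset.card_insert_of_notMem hyxC, Finset.card_insert_of_notMem hxC, hCcard]
  · rintro ⟨⟨B, b⟩, b'⟩ hp
    simp only [Finset.mem_sigma, Finset.mem_powersetCard, Finset.mem_erase] at hp
    obtain ⟨⟨⟨hBΩ, hBcard⟩, hb⟩, hb'b, hb'B⟩ := hp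
    have h1 : insert b' ((B.erase b).erase b') = B.erase b :=
      Finset.insert_erase (Finset.mem_erase.2 ⟨hb'b, hb'B⟩)
    simp only []
    rw [h1, Finset.insert_erase hb]
  · rintro ⟨⟨C, x⟩, y⟩ hq
    simp only [Finset.mem_sigma, Finset.mem_powersetCard, Finset.mem_sdiff,
      Finset.mem_erase] at hq
    obtain ⟨⟨⟨hCΩ, hCcard⟩, hx, hxC⟩, hyx, hy, hyC⟩ := hq
    have hyxC : y ∉ insert x C := by simp [Finset.mem_insert, hyx, hyC]
    simp only []
    rw [Finset.erase_insert hyxC, Finset.erase_insert hxC]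
  · rintro ⟨⟨B, b⟩, b'⟩ hp
    simp only [Finset.mem_sigma, Finset.mem_powersetCard, Finset.mem_erase] at hp
    obtain ⟨⟨⟨hBΩ, hBcard⟩, hb⟩, hb'b, hb'B⟩ := hp
    have h1 : insert b' ((B.erase b).erase b') = B.erase b :=
      Finset.insert_erase (Finset.mem_erase.2 ⟨hb'b, hb'B⟩)
    have h2 : insert b ((B.erase b).erase b') = B.erase b' := by
      rw [Finset.erase_right_comm, Finset.insert_erase
        (Finset.mem_erase.2 ⟨fun h => hb'b h.symm, hb⟩)]
    simp only [h1, h2]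

lemma lw_key {α : Type*} [DecidableEq α] (k : ℕ) (hk : 1 ≤ k) (Ω₀ : Finset α)
    (hn : 2 * k - 1 ≤ Ω₀.card) (g : Finset α → ℝ)
    (hg : ∀ B ∈ Ω₀.powersetCard k, ∑ b ∈ B, g (B.erase b) = 0) :
    ∀ A ∈ Ω₀.powersetCard (k - 1), g A = 0 := by
  rcases Nat.lt_or_ge k 2 with hk2 | hk2
  · -- k = 1
    have hk1 : k = 1 := by omega
    subst hk1
    intro A hA
    simp only [Nat.sub_self, Finset.powersetCard_zero, Finset.mem_singleton] at hA
    subst hA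
    obtain ⟨b, hb⟩ : Ω₀.Nonempty := Finset.card_pos.1 (by omega)
    have := hg {b} (Finset.mem_powersetCard.2 ⟨Finset.singleton_subset_iff.2 hb, rfl⟩)
    simpa [Finset.erase_singleton] using this
  · obtain ⟨m, rfl⟩ : ∃ m, k = m + 2 := ⟨k - 2, by omega⟩
    intro A hA
    have hA' : A ∈ Ω₀.powersetCard (m + 1) := hA
    have expand : ∀ (s : Finset α) (t : α → ℝ),
        (∑ b ∈ s, t b)^2 = ∑ b ∈ s, (t b)^2 + ∑ b ∈ s, ∑ b' ∈ s.erase b, t b * t b' := by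
      intro s t
      rw [sq, Finset.sum_mul_sum, ← Finset.sum_add_distrib]
      refine Finset.sum_congr rfl fun b hb => ?_
      rw [← Finset.add_sum_erase _ (fun b' => t b * t b') hb, sq]
    have e1 : (0:ℝ) = ∑ A ∈ Ω₀.powersetCard (m+1), ((Ω₀.card - (m+1) : ℕ) : ℝ) * (g A)^2
        + ∑ B ∈ Ω₀.powersetCard (m + 2), ∑ b ∈ B, ∑ b' ∈ B.erase b,
            g (B.erase b) * g (B.erase b') := by
      calc (0:ℝ) = ∑ B ∈ Ω₀.powersetCard (m+2), (∑ b ∈ B, g (B.erase b))^2 :=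
            (Finset.sum_eq_zero fun B hB => by rw [hg B hB]; norm_num).symm
        _ = ∑ B ∈ Ω₀.powersetCard (m+2), (∑ b ∈ B, (g (B.erase b))^2
              + ∑ b ∈ B, ∑ b' ∈ B.erase b, g (B.erase b) * g (B.erase b')) :=
            Finset.sum_congr rfl fun B _ => expand B _
        _ = _ := by rw [Finset.sum_add_distrib, lw_sum_a]
    have e2 : ∑ C ∈ Ω₀.powersetCard m, (∑ x ∈ Ω₀ \ C, g (insert x C))^2
        = ∑ A ∈ Ω₀.powersetCard (m+1), ((m+1 : ℕ) : ℝ) * (g A)^2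
          + ∑ C ∈ Ω₀.powersetCard m, ∑ x ∈ Ω₀ \ C, ∑ y ∈ (Ω₀ \ C).erase x,
              g (insert x C) * g (insert y C) := by
      calc ∑ C ∈ Ω₀.powersetCard m, (∑ x ∈ Ω₀ \ C, g (insert x C))^2
          = ∑ C ∈ Ω₀.powersetCard m, (∑ x ∈ Ω₀ \ C, (g (insert x C))^2
              + ∑ x ∈ Ω₀ \ C, ∑ y ∈ (Ω₀ \ C).erase x, g (insert x C) * g (insert y C)) :=
            Finset.sum_congr rfl fun C _ => expand _ _
        _ = _ := by rw [Finset.sum_add_distrib, lw_sum_b]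
    have hX := lw_sum_c m Ω₀ g
    set T := ∑ A ∈ Ω₀.powersetCard (m+1), (g A)^2 with hT_def
    have hmulT : ∀ (c : ℕ), ∑ A ∈ Ω₀.powersetCard (m+1), (c : ℝ) * (g A)^2 = (c:ℝ) * T := by
      intro c; rw [hT_def, Finset.mul_sum]
    rw [hmulT] at e1 e2
    have hS2 : (0:ℝ) ≤ ∑ C ∈ Ω₀.powersetCard m, (∑ x ∈ Ω₀ \ C, g (insert x C))^2 :=
      Finset.sum_nonneg fun _ _ => sq_nonneg _
    have hT0 : (0:ℝ) ≤ T := Finset.sum_nonneg fun _ _ => sq_nonneg _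
    have hc1 : ((m + 2 : ℕ) : ℝ) ≤ ((Ω₀.card - (m+1) : ℕ) : ℝ) := by
      exact Nat.cast_le.2 (by omega)
    have hc1T : ((m + 2 : ℕ) : ℝ) * T ≤ ((Ω₀.card - (m+1) : ℕ) : ℝ) * T :=
      mul_le_mul_of_nonneg_right hc1 hT0
    have hT : T = 0 := by
      push_cast at e1 e2 hc1T
      linarith [e1, e2, hX, hS2, hc1T, hT0]
    have hsq : (g A)^2 = 0 :=
      (Finset.sum_eq_zero_iff_of_nonneg (fun A _ => sq_nonneg (g A))).1 hT A hA'
    exact pow_eq_zero_iff (by norm_num) |>.1 hsq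

open Pointwise

universe u

section LW

variable {Ω : Type u} {G : Type*} [Group G] [MulAction G Ω]

/-- The orbit relation on subsets satisfying a predicate. -/
abbrev lwRel (G : Type*) {Ω : Type u} [Group G] [MulAction G Ω] (P : Set Ω → Prop) :
    {Γ : Set Ω // P Γ} → {Γ : Set Ω // P Γ} → Prop :=
  fun Γ₁ Γ₂ => ∃ g : G, g • Γ₁.val = Γ₂.val

lemma lwRel_equivalence (G : Type*) {Ω : Type u} [Group G] [MulAction G Ω] (P : Set Ω → Prop) :
    Equivalence (lwRel G P) := by
  constructor
  · exact fun Γ => ⟨1, one_smul _ _⟩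
  · rintro Γ₁ Γ₂ ⟨g, hg⟩; exact ⟨g⁻¹, by rw [← hg, inv_smul_smul]⟩
  · rintro Γ₁ Γ₂ Γ₃ ⟨g, hg⟩ ⟨h, hh⟩; exact ⟨h * g, by rw [mul_smul, hg, hh]⟩

variable (G) in
/-- Predicate for being a finite set of size `j`. -/
abbrev lwP (Ω : Type u) (j : ℕ) : Set Ω → Prop := fun Γ => Γ.Finite ∧ Γ.ncard = j

noncomputable def lwg (G : Type*) {Ω : Type u} [Group G] [MulAction G Ω] (j : ℕ)
    (f : Quot (lwRel G (lwP Ω j)) → ℝ) : Finset Ω → ℝ :=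
  fun A => if h : A.card = j then
    f (Quot.mk _ ⟨(A : Set Ω), A.finite_toSet, by simp [Set.ncard_coe_finset, h]⟩) else 0

lemma lwg_smul [DecidableEq Ω] (j : ℕ) (f : Quot (lwRel G (lwP Ω j)) → ℝ)
    (g : G) (A : Finset Ω) : lwg G j f (g • A) = lwg G j f A := by
  unfold lwg
  have hcard : (g • A).card = A.card := Finset.card_smul_finset g A
  by_cases h : A.card = j
  · rw [dif_pos h, dif_pos (hcard.trans h)]
    refine congrArg f (Quot.sound ⟨g, ?_⟩).symm
    exact (Finset.coe_smul_finset g A).symm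
  · rw [dif_neg h, dif_neg (fun hc => h (hcard ▸ hc))]

lemma lwg_coe (j : ℕ) (f : Quot (lwRel G (lwP Ω j)) → ℝ) (A : Finset Ω) (h : A.card = j) :
    lwg G j f A
      = f (Quot.mk _ ⟨(A : Set Ω), A.finite_toSet, by simp [Set.ncard_coe_finset, h]⟩) :=
  dif_pos h

lemma lwg_add (j : ℕ) (f f' : Quot (lwRel G (lwP Ω j)) → ℝ) (A : Finset Ω) :
    lwg G j (f + f') A = lwg G j f A + lwg G j f' A := by
  unfold lwg; split <;> simp

lemma lwg_smul_real (j : ℕ) (c : ℝ) (f : Quot (lwRel G (lwP Ω j)) → ℝ) (A : Finset Ω) :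
    lwg G j (c • f) A = c * lwg G j f A := by
  unfold lwg; split <;> simp

lemma smul_finset_erase [DecidableEq Ω] (g : G) (S : Finset Ω) (b : Ω) :
    (g • S).erase (g • b) = g • (S.erase b) := by
  apply Finset.coe_injective
  rw [Finset.coe_erase, Finset.coe_smul_finset, Finset.coe_smul_finset, Finset.coe_erase,
    Set.smul_set_sdiff, Set.smul_set_singleton]

variable (G) in
noncomputable def lwU [DecidableEq Ω] (k : ℕ) (f : Quot (lwRel G (lwP Ω (k-1))) → ℝ) :
    {Γ : Set Ω // lwP Ω k Γ} → ℝ :=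
  fun Γ => ∑ b ∈ Γ.2.1.toFinset, lwg G (k-1) f (Γ.2.1.toFinset.erase b)

lemma lwU_invariant [DecidableEq Ω] (k : ℕ) (f : Quot (lwRel G (lwP Ω (k-1))) → ℝ)
    (Γ₁ Γ₂ : {Γ : Set Ω // lwP Ω k Γ}) (h : lwRel G (lwP Ω k) Γ₁ Γ₂) :
    lwU G k f Γ₁ = lwU G k f Γ₂ := by
  obtain ⟨g, hg⟩ := h
  unfold lwU
  have hS : Γ₂.2.1.toFinset = g • Γ₁.2.1.toFinset := by
    apply Finset.coe_injective
    rw [Finset.coe_smul_finset, Set.Finite.coe_toFinset, Set.Finite.coe_toFinset, hg]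
  rw [hS]
  rw [show (g • Γ₁.2.1.toFinset) = Γ₁.2.1.toFinset.image (fun b => g • b) from rfl]
  rw [Finset.sum_image (fun a _ b _ h => MulAction.injective g h)]
  refine (Finset.sum_congr rfl fun b hb => ?_).symm
  have : (g • Γ₁.2.1.toFinset).erase (g • b) = g • (Γ₁.2.1.toFinset.erase b) :=
    smul_finset_erase g _ b
  rw [show ((Γ₁.2.1.toFinset.image (fun b => g • b)).erase (g • b))
      = (g • Γ₁.2.1.toFinset).erase (g • b) from rfl, this, lwg_smul]

variable (G) in
noncomputable def lwT [DecidableEq Ω] (k : ℕ) (f : Quot (lwRel G (lwP Ω (k-1))) → ℝ) :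
    Quot (lwRel G (lwP Ω k)) → ℝ :=
  Quot.lift (lwU G k f) (lwU_invariant k f)

end LW

section LW2

variable {Ω : Type u} {G : Type*} [Group G] [MulAction G Ω]

variable (G) in
noncomputable def lwL [DecidableEq Ω] (k : ℕ) :
    (Quot (lwRel G (lwP Ω (k-1))) → ℝ) →ₗ[ℝ] (Quot (lwRel G (lwP Ω k)) → ℝ) where
  toFun := lwT G k
  map_add' f f' := by
    funext q
    induction q using Quot.ind with
    | _ Γ =>
      show lwU G k (f + f') Γ = lwU G k f Γ + lwU G k f' Γ
      unfold lwU
      rw [← Finset.sum_add_distrib]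
      exact Finset.sum_congr rfl fun b _ => lwg_add _ _ _ _
  map_smul' c f := by
    funext q
    induction q using Quot.ind with
    | _ Γ =>
      show lwU G k (c • f) Γ = c * lwU G k f Γ
      unfold lwU
      rw [Finset.mul_sum]
      exact Finset.sum_congr rfl fun b _ => lwg_smul_real _ _ _ _

lemma lwL_injective [DecidableEq Ω] (k : ℕ) (hk : 1 ≤ k)
    (hΩ : 2 * (k : Cardinal.{u}) ≤ Cardinal.mk Ω) :
    Function.Injective (lwL G (Ω := Ω) k) := by
  refine (injective_iff_map_eq_zero (lwL G (Ω := Ω) k)).2 fun f hf => ?_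
  funext q
  induction q using Quot.ind with
  | _ Γ =>
  obtain ⟨A, hA, hAcard⟩ := Γ
  have h2k : Cardinal.mk (ULift.{u} (Fin (2*k))) ≤ Cardinal.mk Ω := by
    simpa using hΩ
  obtain ⟨e⟩ := (Cardinal.le_def _ _).1 h2k
  let e' : Fin (2*k) ↪ Ω := (Equiv.ulift.symm.toEmbedding).trans e
  set A₀ := hA.toFinset with hA₀def
  set Ω₀ := A₀ ∪ Finset.univ.map e' with hΩ₀def
  have hcardΩ₀ : 2*k - 1 ≤ Ω₀.card := by
    calc 2*k - 1 ≤ (Finset.univ.map e').card := by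
          rw [Finset.card_map, Finset.card_univ, Fintype.card_fin]; omega
      _ ≤ Ω₀.card := Finset.card_le_card Finset.subset_union_right
  have hyp : ∀ B ∈ Ω₀.powersetCard k, ∑ b ∈ B, lwg G (k-1) f (B.erase b) = 0 := by
    intro B hB
    have hBcard : B.card = k := (Finset.mem_powersetCard.1 hB).2
    have hB' : lwP Ω k (↑B : Set Ω) := ⟨B.finite_toSet, by simp [Set.ncard_coe_finset, hBcard]⟩
    have htoF : hB'.1.toFinset = B :=
      Finset.coe_injective (by rw [Set.Finite.coe_toFinset])
    have h0 := congrFun hf (Quot.mk _ ⟨(B : Set Ω), hB'⟩)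
    calc ∑ b ∈ B, lwg G (k-1) f (B.erase b)
        = lwU G k f ⟨(B : Set Ω), hB'⟩ := by unfold lwU; rw [htoF]
      _ = 0 := h0
  have hA₀card : A₀.card = k - 1 := by
    rw [hA₀def, ← Set.ncard_eq_toFinset_card A hA, hAcard]
  have hA₀mem : A₀ ∈ Ω₀.powersetCard (k-1) :=
    Finset.mem_powersetCard.2 ⟨Finset.subset_union_left, hA₀card⟩
  have hz := lw_key k hk Ω₀ hcardΩ₀ (lwg G (k-1) f) hyp A₀ hA₀mem
  rw [lwg_coe (k-1) f A₀ hA₀card] at hz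
  show f (Quot.mk _ ⟨A, hA, hAcard⟩) = 0
  rw [← hz]
  exact congrArg f (congrArg (Quot.mk _) (Subtype.ext (Set.Finite.coe_toFinset hA).symm))

end LW2

section LW3

variable {Ω : Type u} {G : Type*} [Group G] [MulAction G Ω]

lemma lw_surj (k : ℕ) (hk : 1 ≤ k) (hΩ : 2 * (k : Cardinal.{u}) ≤ Cardinal.mk Ω) :
    Function.Surjective
      (fun p : (Σ q : Quot (lwRel G (lwP Ω k)), {x : Ω // x ∈ (Quot.out q).val}) =>
        Quot.mk (lwRel G (lwP Ω (k-1)))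
          ⟨(Quot.out p.1).val \ {p.2.val},
           (Quot.out p.1).2.1.diff,
           by rw [Set.ncard_diff_singleton_of_mem p.2.2,
             (Quot.out p.1).2.2]⟩) := by
  intro q1
  obtain ⟨⟨A, hA, hAcard⟩, rfl⟩ := Quot.exists_rep q1
  have hx : ∃ x, x ∉ A := by
    by_contra h
    push_neg at h
    have huniv : A = Set.univ := Set.eq_univ_of_forall h
    have hfin : Finite Ω := Set.finite_univ_iff.1 (huniv ▸ hA)
    haveI := Fintype.ofFinite Ω
    have hmk : Cardinal.mk Ω = (Fintype.card Ω : Cardinal) := Cardinal.mk_fintype Ω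
    have hcard : Fintype.card Ω = k - 1 := by
      have h2 := Set.ncard_univ Ω
      rw [← huniv, hAcard, Nat.card_eq_fintype_card] at h2
      omega
    rw [hmk, hcard] at hΩ
    have : (2*k : ℕ) ≤ (k-1 : ℕ) := by exact_mod_cast hΩ
    omega
  obtain ⟨x, hxA⟩ := hx
  have hBfin : (insert x A).Finite := hA.insert x
  have hBcard : (insert x A).ncard = k := by
    rw [Set.ncard_insert_of_notMem hxA hA, hAcard]; omega
  have hout : lwRel G (lwP Ω k)
      (Quot.out (Quot.mk (lwRel G (lwP Ω k)) ⟨insert x A, hBfin, hBcard⟩))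
      ⟨insert x A, hBfin, hBcard⟩ :=
    ((lwRel_equivalence G (lwP Ω k)).eqvGen_iff).1
      (Quot.eq.1 (Quot.out_eq (Quot.mk (lwRel G (lwP Ω k)) ⟨insert x A, hBfin, hBcard⟩)))
  obtain ⟨g, hg⟩ := hout
  have hxB : g⁻¹ • x ∈ (Quot.out (Quot.mk (lwRel G (lwP Ω k)) ⟨insert x A, hBfin, hBcard⟩)).val := by
    rw [← Set.mem_smul_set_iff_inv_smul_mem, hg]; exact Set.mem_insert _ _
  refine ⟨⟨Quot.mk (lwRel G (lwP Ω k)) ⟨insert x A, hBfin, hBcard⟩, ⟨g⁻¹ • x, hxB⟩⟩, ?_⟩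
  apply Quot.sound
  refine ⟨g, ?_⟩
  show g • (_ \ {g⁻¹ • x}) = A
  rw [Set.smul_set_sdiff, hg, Set.smul_set_singleton, smul_inv_smul,
    Set.insert_diff_self_of_notMem hxA]

end LW3

theorem orbit_count_on_subsets_monotone {Ω : Type u} (G : Type*) [Group G] [MulAction G Ω]
    (k : ℕ) (hk : 1 ≤ k) (hΩ : 2 * (k : Cardinal.{u}) ≤ Cardinal.mk Ω) :
    Cardinal.mk (Quot (fun (Γ₁ Γ₂ : {Γ : Set Ω // Γ.Finite ∧ Γ.ncard = k - 1}) =>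
        ∃ g : G, g • Γ₁.val = Γ₂.val)) ≤
      Cardinal.mk (Quot (fun (Γ₁ Γ₂ : {Γ : Set Ω // Γ.Finite ∧ Γ.ncard = k}) =>
        ∃ g : G, g • Γ₁.val = Γ₂.val)) := by
  classical
  show Cardinal.mk (Quot (lwRel G (lwP Ω (k-1)))) ≤ Cardinal.mk (Quot (lwRel G (lwP Ω k)))
  have hsurj := lw_surj (G := G) (Ω := Ω) k hk hΩ
  have hQ1 : Cardinal.mk (Quot (lwRel G (lwP Ω (k-1))))
      ≤ Cardinal.mk (Σ q : Quot (lwRel G (lwP Ω k)), {x : Ω // x ∈ (Quot.out q).val}) :=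
    Cardinal.mk_le_of_surjective hsurj
  by_cases hfin : Cardinal.aleph0 ≤ Cardinal.mk (Quot (lwRel G (lwP Ω k)))
  · have hfib : ∀ q : Quot (lwRel G (lwP Ω k)),
        Cardinal.mk {x : Ω // x ∈ (Quot.out q).val} ≤ Cardinal.aleph0 := by
      intro q
      haveI := (Quot.out q).2.1.to_subtype
      exact (Cardinal.lt_aleph0_iff_finite.2 inferInstance).le
    calc Cardinal.mk (Quot (lwRel G (lwP Ω (k-1)))) ≤ _ := hQ1
      _ = Cardinal.sum (fun q : Quot (lwRel G (lwP Ω k)) =>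
            Cardinal.mk {x : Ω // x ∈ (Quot.out q).val}) := Cardinal.mk_sigma _
      _ ≤ Cardinal.sum (fun _ : Quot (lwRel G (lwP Ω k)) => Cardinal.aleph0) :=
            Cardinal.sum_le_sum _ _ hfib
      _ = Cardinal.mk (Quot (lwRel G (lwP Ω k))) * Cardinal.aleph0 := Cardinal.sum_const' _ _
      _ = Cardinal.mk (Quot (lwRel G (lwP Ω k))) := Cardinal.mul_aleph0_eq hfin
  · push_neg at hfin
    haveI hQ2fin : Finite (Quot (lwRel G (lwP Ω k))) := Cardinal.lt_aleph0_iff_finite.1 hfin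
    haveI : ∀ q : Quot (lwRel G (lwP Ω k)), Finite {x : Ω // x ∈ (Quot.out q).val} :=
      fun q => (Quot.out q).2.1.to_subtype
    haveI hQ1fin : Finite (Quot (lwRel G (lwP Ω (k-1)))) := Finite.of_surjective _ hsurj
    haveI := Fintype.ofFinite (Quot (lwRel G (lwP Ω (k-1))))
    haveI := Fintype.ofFinite (Quot (lwRel G (lwP Ω k)))
    have hr : Fintype.card (Quot (lwRel G (lwP Ω (k-1))))
        ≤ Fintype.card (Quot (lwRel G (lwP Ω k))) := by
      have hinj := lwL_injective (G := G) (Ω := Ω) k hk hΩ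
      have hfr := LinearMap.finrank_le_finrank_of_injective hinj
      rwa [Module.finrank_fintype_fun_eq_card, Module.finrank_fintype_fun_eq_card] at hfr
    rw [Cardinal.mk_fintype, Cardinal.mk_fintype]
    exact_mod_cast hr
end
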